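/- arXiv:2507.01370 — 6 statements merged into one kernel-verified Lean document; each statement's English description precedes it below -/
import Mathlib

section
/- Define on the set Q = {(t,n) ∈ ℕ×ℕ : t ≤ n} (thought of as formal fractions t/n) the preorder ⪯ generated by the relations (t+1)/(n+1) ⪯ t/n and t/n ⪯ t/(n+1) for all t/n ∈ Q, closed under transitivity. Then t/n ⪯ t'/n' if and only if t ≥ t' + max(0, n − n'). -/
/-- The preorder `⪯` on formal fractions `t/n` (pairs `(t,n)` with `t ≤ n`), generated by
the arrows `(t+1)/(n+1) ⪯ t/n` and `t/n ⪯ t/(n+1)`, closed under reflexivity and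
transitivity. -/
inductive QLe : ℕ × ℕ → ℕ × ℕ → Prop
  | tox {t n : ℕ} (h : t ≤ n) : QLe (t + 1, n + 1) (t, n)
  | tol {t n : ℕ} (h : t ≤ n) : QLe (t, n) (t, n + 1)
  | refl {t n : ℕ} (h : t ≤ n) : QLe (t, n) (t, n)
  | trans {a b c : ℕ × ℕ} : QLe a b → QLe b c → QLe a c

lemma qle_forward : ∀ {a b : ℕ × ℕ}, QLe a b → b.1 + (a.2 - b.2) ≤ a.1 := by
  intro a b h
  induction h with
  | tox h => simp
  | tol h => simp
  | refl h => simp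
  | trans h1 h2 ih1 ih2 => omega

lemma qle_toxk : ∀ (k t n : ℕ), k ≤ t → t ≤ n → QLe (t, n) (t - k, n - k) := by
  intro k
  induction k with
  | zero => intro t n _ h; simpa using QLe.refl h
  | succ k ih =>
    intro t n hk h
    have h1 : QLe (t, n) (t - 1, n - 1) := by
      have : QLe (t - 1 + 1, n - 1 + 1) (t - 1, n - 1) := QLe.tox (by omega)
      have e1 : t - 1 + 1 = t := by omega
      have e2 : n - 1 + 1 = n := by omega
      rwa [e1, e2] at this
    have h2 : QLe (t - 1, n - 1) (t - 1 - k, n - 1 - k) := ih (t - 1) (n - 1) (by omega) (by omega)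
    have e1 : t - 1 - k = t - (k + 1) := by omega
    have e2 : n - 1 - k = n - (k + 1) := by omega
    rw [e1, e2] at h2
    exact QLe.trans h1 h2

lemma qle_tolk : ∀ (k t n : ℕ), t ≤ n → QLe (t, n) (t, n + k) := by
  intro k
  induction k with
  | zero => intro t n h; exact QLe.refl h
  | succ k ih =>
    intro t n h
    exact QLe.trans (ih t n h) (by simpa [Nat.add_assoc] using QLe.tol (show t ≤ n + k by omega))

/-- `t/n ⪯ t'/n'` iff `t ≥ t' + max(0, n − n')`. -/
theorem stmt_0 (t n t' n' : ℕ) (h : t ≤ n) (h' : t' ≤ n') :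
    QLe (t, n) (t', n') ↔ (t' : ℤ) + max 0 ((n : ℤ) - (n' : ℤ)) ≤ (t : ℤ) := by
  constructor
  · intro hq
    have := qle_forward hq
    simp at this
    omega
  · intro hle
    have hnat : t' + (n - n') ≤ t := by omega
    have hd : t - (t - t') = t' := by omega
    have h1 : QLe (t, n) (t', n - (t - t')) := by
      have := qle_toxk (t - t') t n (by omega) h
      rwa [hd] at this
    have h2 : QLe (t', n - (t - t')) (t', n') := by
      have := qle_tolk (n' - (n - (t - t'))) t' (n - (t - t')) (by omega)
      have e : n - (t - t') + (n' - (n - (t - t'))) = n' := by omega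
      rwa [e] at this
    exact QLe.trans h1 h2
end

section
/- Let D ≥ 1 and let ⪯₀ be the monoidal preorder on (ℕ×ℕ)^D (vectors of dosewise tallies tᵈ:uᵈ) generated by the arrows: (i) tol₁: adding one toleration at dose 1; (ii) titroⱼ (2 ≤ j ≤ D): moving one toleration from dose j−1 to dose j; (iii) titrxⱼ (1 ≤ j ≤ D−1): moving one toxicity from dose j to dose j+1; (iv) det_D: deleting one toxicity at dose D. Then q ⪯₀ q' if and only if U ≤ U' componentwise and T ≥ T' componentwise, where Uᵈ = Σ_{j≥d} uⱼ is the tolerated dose intensity and Tᵈ = Σ_{j≤d} tⱼ is the toxicity profile. -/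
/-- The tally with the single pair `v` (toxicity count, toleration count) at dose `j`
and `(0,0)` elsewhere. -/
def sgl {D : ℕ} (j : Fin D) (v : ℕ × ℕ) : Fin D → ℕ × ℕ := Pi.single j v

/-- The monoidal preorder `⪯₀` on dosewise tallies `(ℕ×ℕ)^D` (at each dose a pair
`(t, u)` of toxicity and toleration counts), generated monoidally (i.e. closed under
adding an arbitrary common tally `q` to both sides) by:
tol₁ (add a toleration at dose 1), titroⱼ (move a toleration from dose j−1 to dose j),
titrxⱼ (move a toxicity from dose j to dose j+1), det_D (delete a toxicity at dose D),
together with reflexivity and transitivity. -/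
inductive Pre0 (D : ℕ) : (Fin D → ℕ × ℕ) → (Fin D → ℕ × ℕ) → Prop
  | tol1 (h : 0 < D) (q : Fin D → ℕ × ℕ) :
      Pre0 D q (q + sgl ⟨0, h⟩ (0, 1))
  | titro (q : Fin D → ℕ × ℕ) (j : Fin D) (h : j.1 + 1 < D) :
      Pre0 D (q + sgl j (0, 1)) (q + sgl ⟨j.1 + 1, h⟩ (0, 1))
  | titrx (q : Fin D → ℕ × ℕ) (j : Fin D) (h : j.1 + 1 < D) :
      Pre0 D (q + sgl j (1, 0)) (q + sgl ⟨j.1 + 1, h⟩ (1, 0))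
  | det (h : 0 < D) (q : Fin D → ℕ × ℕ) :
      Pre0 D (q + sgl ⟨D - 1, Nat.sub_lt h Nat.one_pos⟩ (1, 0)) q
  | refl (q : Fin D → ℕ × ℕ) : Pre0 D q q
  | trans {q q' q'' : Fin D → ℕ × ℕ} : Pre0 D q q' → Pre0 D q' q'' → Pre0 D q q''

/-- Toxicity profile: `T_d = ∑_{j ≤ d} t_j`. -/
def toxProfile {D : ℕ} (q : Fin D → ℕ × ℕ) (d : Fin D) : ℕ :=
  ∑ j ∈ Finset.univ.filter (fun j => j ≤ d), (q j).1

/-- Tolerated dose intensity: `U_d = ∑_{j ≥ d} u_j`. -/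
def tolIntensity {D : ℕ} (q : Fin D → ℕ × ℕ) (d : Fin D) : ℕ :=
  ∑ j ∈ Finset.univ.filter (fun j => d ≤ j), (q j).2

namespace Stmt3
variable {D : ℕ}

lemma tolIntensity_add (q r : Fin D → ℕ × ℕ) (d : Fin D) :
    tolIntensity (q + r) d = tolIntensity q d + tolIntensity r d := by
  simp [tolIntensity, Finset.sum_add_distrib]

lemma toxProfile_add (q r : Fin D → ℕ × ℕ) (d : Fin D) :
    toxProfile (q + r) d = toxProfile q d + toxProfile r d := by
  simp [toxProfile, Finset.sum_add_distrib]

lemma tolIntensity_sgl (j : Fin D) (v : ℕ × ℕ) (d : Fin D) :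
    tolIntensity (sgl j v) d = if d ≤ j then v.2 else 0 := by
  classical
  unfold tolIntensity sgl
  by_cases h : d ≤ j
  · rw [if_pos h, Finset.sum_eq_single_of_mem j (by simp [h])]
    · simp
    · intro b _ hb; simp [Pi.single_eq_of_ne hb]
  · rw [if_neg h, Finset.sum_eq_zero]
    intro b hb
    have hbj : b ≠ j := by rintro rfl; exact h (Finset.mem_filter.mp hb).2
    simp [Pi.single_eq_of_ne hbj]

lemma toxProfile_sgl (j : Fin D) (v : ℕ × ℕ) (d : Fin D) :
    toxProfile (sgl j v) d = if j ≤ d then v.1 else 0 := by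
  classical
  unfold toxProfile sgl
  by_cases h : j ≤ d
  · rw [if_pos h, Finset.sum_eq_single_of_mem j (by simp [h])]
    · simp
    · intro b _ hb; simp [Pi.single_eq_of_ne hb]
  · rw [if_neg h, Finset.sum_eq_zero]
    intro b hb
    have hbj : b ≠ j := by rintro rfl; exact h (Finset.mem_filter.mp hb).2
    simp [Pi.single_eq_of_ne hbj]

lemma tolIntensity_succ (q : Fin D → ℕ × ℕ) (j : Fin D) (h : j.1 + 1 < D) :
    tolIntensity q j = (q j).2 + tolIntensity q ⟨j.1 + 1, h⟩ := by
  unfold tolIntensity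
  have : Finset.univ.filter (fun k : Fin D => j ≤ k) =
      insert j (Finset.univ.filter (fun k : Fin D => (⟨j.1+1,h⟩ : Fin D) ≤ k)) := by
    ext k
    simp only [Finset.mem_insert, Finset.mem_filter, Finset.mem_univ, true_and, Fin.le_def,
      Fin.ext_iff]
    omega
  rw [this, Finset.sum_insert (by simp [Fin.le_def])]

lemma tolIntensity_last (q : Fin D → ℕ × ℕ) (j : Fin D) (h : ¬ j.1 + 1 < D) :
    tolIntensity q j = (q j).2 := by
  unfold tolIntensity
  have : Finset.univ.filter (fun k : Fin D => j ≤ k) = {j} := by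
    ext k
    have := k.2
    simp only [Finset.mem_filter, Finset.mem_univ, true_and, Fin.le_def, Finset.mem_singleton,
      Fin.ext_iff]
    omega
  rw [this, Finset.sum_singleton]

lemma toxProfile_succ (q : Fin D → ℕ × ℕ) (j : Fin D) (k : ℕ) (h : k + 1 = j.1) :
    toxProfile q j = toxProfile q ⟨k, by omega⟩ + (q j).1 := by
  unfold toxProfile
  have : Finset.univ.filter (fun e : Fin D => e ≤ j) =
      insert j (Finset.univ.filter (fun e : Fin D => e ≤ (⟨k, by omega⟩ : Fin D))) := by
    ext e
    simp only [Finset.mem_insert, Finset.mem_filter, Finset.mem_univ, true_and, Fin.le_def,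
      Fin.ext_iff]
    omega
  rw [this, Finset.sum_insert (by simp [Fin.le_def]; omega), add_comm]

lemma toxProfile_zero (q : Fin D → ℕ × ℕ) (j : Fin D) (h : j.1 = 0) :
    toxProfile q j = (q j).1 := by
  unfold toxProfile
  have : Finset.univ.filter (fun e : Fin D => e ≤ j) = {j} := by
    ext e
    simp only [Finset.mem_filter, Finset.mem_univ, true_and, Fin.le_def, Finset.mem_singleton,
      Fin.ext_iff]
    omega
  rw [this, Finset.sum_singleton]

lemma tolIntensity_antitone (q : Fin D → ℕ × ℕ) {d e : Fin D} (h : d ≤ e) :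
    tolIntensity q e ≤ tolIntensity q d := by
  apply Finset.sum_le_sum_of_subset
  intro k hk
  simp only [Finset.mem_filter, Finset.mem_univ, true_and] at *
  exact le_trans h hk

lemma toxProfile_monotone (q : Fin D → ℕ × ℕ) {d e : Fin D} (h : d ≤ e) :
    toxProfile q d ≤ toxProfile q e := by
  apply Finset.sum_le_sum_of_subset
  intro k hk
  simp only [Finset.mem_filter, Finset.mem_univ, true_and] at *
  exact le_trans hk h


lemma forward {q q' : Fin D → ℕ × ℕ} (h : Pre0 D q q') :
    (∀ d, tolIntensity q d ≤ tolIntensity q' d) ∧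
      (∀ d, toxProfile q' d ≤ toxProfile q d) := by
  induction h with
  | tol1 h q =>
    constructor <;> intro d <;>
      simp [tolIntensity_add, toxProfile_add, tolIntensity_sgl, toxProfile_sgl]
  | titro q j h =>
    constructor <;> intro d <;>
      simp only [tolIntensity_add, toxProfile_add, tolIntensity_sgl, toxProfile_sgl]
    · refine Nat.add_le_add_left ?_ _
      simp only [Fin.le_def]
      split <;> split <;> omega
    · simp
  | titrx q j h =>
    constructor <;> intro d <;>
      simp only [tolIntensity_add, toxProfile_add, tolIntensity_sgl, toxProfile_sgl]
    · simp
    · refine Nat.add_le_add_left ?_ _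
      simp only [Fin.le_def]
      split <;> split <;> omega
  | det h q =>
    constructor <;> intro d <;>
      simp [tolIntensity_add, toxProfile_add, tolIntensity_sgl, toxProfile_sgl]
  | refl q => exact ⟨fun _ => le_rfl, fun _ => le_rfl⟩
  | trans h1 h2 ih1 ih2 =>
    exact ⟨fun d => le_trans (ih1.1 d) (ih2.1 d), fun d => le_trans (ih2.2 d) (ih1.2 d)⟩

lemma eq_of_UT {q q' : Fin D → ℕ × ℕ}
    (hU : ∀ d, tolIntensity q d = tolIntensity q' d)
    (hT : ∀ d, toxProfile q d = toxProfile q' d) : q = q' := by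
  funext j
  have h2 : (q j).2 = (q' j).2 := by
    by_cases h : j.1 + 1 < D
    · have a := tolIntensity_succ q j h
      have b := tolIntensity_succ q' j h
      have := hU j; have := hU ⟨j.1+1, h⟩; omega
    · have a := tolIntensity_last q j h
      have b := tolIntensity_last q' j h
      have := hU j; omega
  have h1 : (q j).1 = (q' j).1 := by
    rcases Nat.eq_zero_or_eq_succ_pred j.1 with h | h
    · have a := toxProfile_zero q j h
      have b := toxProfile_zero q' j h
      have := hT j; omega
    · have hk : (j.1 - 1) + 1 = j.1 := h.symm ▸ rfl
      have a := toxProfile_succ q j (j.1-1) hk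
      have b := toxProfile_succ q' j (j.1-1) hk
      have := hT j; have := hT ⟨j.1-1, by omega⟩; omega
  exact Prod.ext h1 h2


lemma decompose_snd (q : Fin D → ℕ × ℕ) (j : Fin D) (h : 1 ≤ (q j).2) :
    ∃ r, q = r + sgl j (0, 1) := by
  refine ⟨Function.update q j ((q j).1, (q j).2 - 1), ?_⟩
  funext k
  by_cases hk : k = j
  · subst hk
    simp only [Pi.add_apply, Function.update_self, sgl, Pi.single_eq_same, Prod.ext_iff,
      Prod.fst_add, Prod.snd_add]
    omega
  · simp [Function.update_of_ne hk, sgl, Pi.single_eq_of_ne hk]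

lemma decompose_fst (q : Fin D → ℕ × ℕ) (j : Fin D) (h : 1 ≤ (q j).1) :
    ∃ r, q = r + sgl j (1, 0) := by
  refine ⟨Function.update q j ((q j).1 - 1, (q j).2), ?_⟩
  funext k
  by_cases hk : k = j
  · subst hk
    simp only [Pi.add_apply, Function.update_self, sgl, Pi.single_eq_same, Prod.ext_iff,
      Prod.fst_add, Prod.snd_add]
    omega
  · simp [Function.update_of_ne hk, sgl, Pi.single_eq_of_ne hk]

/-- A single step raising `U` exactly at `d`. -/
lemma tol_step (q : Fin D → ℕ × ℕ) (d : Fin D)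
    (hd : d.1 = 0 ∨ ∀ h : 1 ≤ d.1, 1 ≤ (q ⟨d.1 - 1, by omega⟩).2) :
    ∃ q₁, Pre0 D q q₁ ∧
      (∀ e, tolIntensity q₁ e = tolIntensity q e + if e = d then 1 else 0) ∧
      (∀ e, toxProfile q₁ e = toxProfile q e) := by
  rcases Nat.eq_zero_or_pos d.1 with h0 | h0
  · refine ⟨q + sgl d (0,1), ?_, ?_, ?_⟩
    · have hD : 0 < D := d.pos
      have hd0 : (⟨0, hD⟩ : Fin D) = d := by
        rw [Fin.ext_iff, Fin.val_mk]; omega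
      have := Pre0.tol1 hD q
      rwa [hd0] at this
    · intro e
      rw [tolIntensity_add, tolIntensity_sgl]
      congr 1
      have : e ≤ d ↔ e = d := by
        rw [Fin.le_def, Fin.ext_iff]; omega
      simp [this]
    · intro e; rw [toxProfile_add, toxProfile_sgl]; simp
  · have hu : 1 ≤ (q ⟨d.1 - 1, by omega⟩).2 := (hd.resolve_left (by omega)) h0
    obtain ⟨r, hr⟩ := decompose_snd q _ hu
    have hlt : (d.1 - 1) + 1 < D := by have := d.2; omega
    refine ⟨r + sgl ⟨(d.1-1)+1, hlt⟩ (0,1), ?_, ?_, ?_⟩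
    · rw [hr]; exact Pre0.titro r _ hlt
    · intro e
      rw [hr, tolIntensity_add, tolIntensity_add, tolIntensity_sgl, tolIntensity_sgl]
      have hde : (⟨(d.1-1)+1, hlt⟩ : Fin D) = d := by
        rw [Fin.ext_iff, Fin.val_mk]; omega
      rw [hde]
      simp only [Fin.le_def, Fin.ext_iff, Fin.val_mk]
      split <;> split <;> split <;> omega
    · intro e
      rw [hr, toxProfile_add, toxProfile_add, toxProfile_sgl, toxProfile_sgl]
      simp

/-- A single step lowering `T` exactly at `d`. -/
lemma tox_step (q : Fin D → ℕ × ℕ) (d : Fin D) (ht : 1 ≤ (q d).1) :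
    ∃ q₁, Pre0 D q q₁ ∧
      (∀ e, toxProfile q e = toxProfile q₁ e + if e = d then 1 else 0) ∧
      (∀ e, tolIntensity q₁ e = tolIntensity q e) := by
  obtain ⟨r, hr⟩ := decompose_fst q d ht
  by_cases h : d.1 + 1 < D
  · refine ⟨r + sgl ⟨d.1+1, h⟩ (1,0), ?_, ?_, ?_⟩
    · rw [hr]; exact Pre0.titrx r d h
    · intro e
      rw [hr, toxProfile_add, toxProfile_add, toxProfile_sgl, toxProfile_sgl]
      simp only [Fin.le_def, Fin.ext_iff, Fin.val_mk]
      split <;> split <;> split <;> omega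
    · intro e
      rw [hr, tolIntensity_add, tolIntensity_add, tolIntensity_sgl, tolIntensity_sgl]
      simp
  · have hD : 0 < D := d.pos
    have hdl : d = ⟨D - 1, Nat.sub_lt hD Nat.one_pos⟩ := by
      rw [Fin.ext_iff]; show d.1 = D - 1; have := d.2; omega
    refine ⟨r, ?_, ?_, ?_⟩
    · rw [hr, hdl]; exact Pre0.det hD r
    · intro e
      rw [hr, toxProfile_add, toxProfile_sgl]
      have hd1 : d.1 = D - 1 := by have := d.2; omega
      have hed : e ≤ d := by rw [Fin.le_def, hd1]; have := e.2; omega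
      have : d ≤ e ↔ e = d := ⟨fun h2 => le_antisymm hed h2, fun h2 => h2 ▸ le_rfl⟩
      simp [this]
    · intro e
      rw [hr, tolIntensity_add, tolIntensity_sgl]
      simp


lemma backward : ∀ n (q q' : Fin D → ℕ × ℕ),
    (∑ d, (tolIntensity q' d - tolIntensity q d)) +
      (∑ d, (toxProfile q d - toxProfile q' d)) ≤ n →
    (∀ d, tolIntensity q d ≤ tolIntensity q' d) →
    (∀ d, toxProfile q' d ≤ toxProfile q d) → Pre0 D q q' := by
  intro n
  induction n with
  | zero =>
    intro q q' hm hU hT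
    have h1 : ∑ d, (tolIntensity q' d - tolIntensity q d) = 0 := by omega
    have h2 : ∑ d, (toxProfile q d - toxProfile q' d) = 0 := by omega
    rw [Finset.sum_eq_zero_iff] at h1 h2
    have : q = q' := by
      apply eq_of_UT
      · intro d
        have := h1 d (Finset.mem_univ d); have := hU d; omega
      · intro d
        have := h2 d (Finset.mem_univ d); have := hT d; omega
    rw [this]; exact Pre0.refl q'
  | succ n ih =>
    intro q q' hm hU hT
    classical
    by_cases hUe : ∀ d, tolIntensity q' d ≤ tolIntensity q d
    · by_cases hTe : ∀ d, toxProfile q d ≤ toxProfile q' d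
      · have : q = q' := eq_of_UT (fun d => le_antisymm (hU d) (hUe d))
          (fun d => le_antisymm (hTe d) (hT d))
        rw [this]; exact Pre0.refl q'
      · -- lower T
        push_neg at hTe
        obtain ⟨e0, he0⟩ := hTe
        have hex : ∃ k, ∃ hk : k < D, toxProfile q' ⟨k, hk⟩ < toxProfile q ⟨k, hk⟩ :=
          ⟨e0.1, e0.2, by simpa using he0⟩
        obtain ⟨k0, hkD, hstrict, hmin⟩ : ∃ k, ∃ hk : k < D,
            toxProfile q' ⟨k, hk⟩ < toxProfile q ⟨k, hk⟩ ∧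
            ∀ m (hm : m < D), m < k → toxProfile q ⟨m, hm⟩ ≤ toxProfile q' ⟨m, hm⟩ :=
          ⟨Nat.find hex, (Nat.find_spec hex).1, (Nat.find_spec hex).2,
            fun m hm hlt => le_of_not_gt (fun hc => Nat.find_min hex hlt ⟨hm, hc⟩)⟩
        set d : Fin D := ⟨k0, hkD⟩ with hddef
        have hd1 : d.1 = k0 := rfl
        have ht : 1 ≤ (q d).1 := by
          rcases Nat.eq_zero_or_pos k0 with h0 | h0
          · have := toxProfile_zero q d (hd1.trans h0)
            omega
          · have hlt : k0 - 1 < D := by omega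
            have heq := le_antisymm (hmin (k0-1) hlt (by omega)) (hT ⟨k0-1, hlt⟩)
            have hrec := toxProfile_succ q d (k0 - 1) (by omega)
            have hmono : toxProfile q' ⟨k0-1, hlt⟩ ≤ toxProfile q' d :=
              toxProfile_monotone q' (by rw [Fin.le_def, hd1]; show k0 - 1 ≤ k0; omega)
            omega
        obtain ⟨q₁, hstep, hT1, hU1⟩ := tox_step q d ht
        have hT' : ∀ e, toxProfile q' e ≤ toxProfile q₁ e := by
          intro e
          have h1 := hT1 e
          by_cases he : e = d
          · rw [if_pos he, he] at h1
            rw [he]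
            omega
          · rw [if_neg he] at h1
            have := hT e; omega
        have hsum : ∑ e, (toxProfile q e - toxProfile q' e) =
            (∑ e, (toxProfile q₁ e - toxProfile q' e)) + 1 := by
          have hc : ∀ e ∈ Finset.univ, toxProfile q e - toxProfile q' e =
              (toxProfile q₁ e - toxProfile q' e) + (if e = d then 1 else 0) := by
            intro e _
            have h1 := hT1 e
            have h2 := hT' e
            by_cases he : e = d
            · rw [if_pos he] at h1 ⊢; omega
            · rw [if_neg he] at h1 ⊢; omega
          rw [Finset.sum_congr rfl hc, Finset.sum_add_distrib, Finset.sum_ite_eq' Finset.univ d]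
          simp
        have hUsum : ∑ e, (tolIntensity q' e - tolIntensity q₁ e) =
            ∑ e, (tolIntensity q' e - tolIntensity q e) := by
          apply Finset.sum_congr rfl
          intro e _; rw [hU1 e]
        refine Pre0.trans hstep (ih q₁ q' ?_ (fun e => (hU1 e).symm ▸ hU e) hT')
        omega
    · -- raise U
      push_neg at hUe
      obtain ⟨e0, he0⟩ := hUe
      have hex : ∃ k, ∃ hk : k < D, tolIntensity q ⟨k, hk⟩ < tolIntensity q' ⟨k, hk⟩ :=
        ⟨e0.1, e0.2, by simpa using he0⟩
      obtain ⟨k0, hkD, hstrict, hmin⟩ : ∃ k, ∃ hk : k < D,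
          tolIntensity q ⟨k, hk⟩ < tolIntensity q' ⟨k, hk⟩ ∧
          ∀ m (hm : m < D), m < k → tolIntensity q' ⟨m, hm⟩ ≤ tolIntensity q ⟨m, hm⟩ :=
        ⟨Nat.find hex, (Nat.find_spec hex).1, (Nat.find_spec hex).2,
          fun m hm hlt => le_of_not_gt (fun hc => Nat.find_min hex hlt ⟨hm, hc⟩)⟩
      set d : Fin D := ⟨k0, hkD⟩ with hddef
      have hd1 : d.1 = k0 := rfl
      have hcond : d.1 = 0 ∨ ∀ h : 1 ≤ d.1, 1 ≤ (q ⟨d.1 - 1, by omega⟩).2 := by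
        rcases Nat.eq_zero_or_pos k0 with h0 | h0
        · exact Or.inl (hd1.trans h0)
        · refine Or.inr fun h1 => ?_
          have hlt : d.1 - 1 < D := by omega
          have heq := le_antisymm (hU ⟨d.1-1, hlt⟩) (hmin (d.1-1) hlt (by omega))
          have hrec := tolIntensity_succ q ⟨d.1-1, hlt⟩ (by show d.1 - 1 + 1 < D; omega)
          have hmk : (⟨(⟨d.1-1, hlt⟩ : Fin D).1 + 1,
              by show d.1 - 1 + 1 < D; omega⟩ : Fin D) = d := by
            rw [Fin.ext_iff]; show d.1 - 1 + 1 = d.1; omega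
          rw [hmk] at hrec
          have hmono : tolIntensity q' d ≤ tolIntensity q' ⟨d.1-1, hlt⟩ :=
            tolIntensity_antitone q' (by rw [Fin.le_def]; show d.1 - 1 ≤ d.1; omega)
          omega
      obtain ⟨q₁, hstep, hU1, hT1⟩ := tol_step q d hcond
      have hU' : ∀ e, tolIntensity q₁ e ≤ tolIntensity q' e := by
        intro e
        have h1 := hU1 e
        by_cases he : e = d
        · rw [if_pos he, he] at h1
          rw [he]
          omega
        · rw [if_neg he] at h1
          have := hU e; omega
      have hsum : ∑ e, (tolIntensity q' e - tolIntensity q e) =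
          (∑ e, (tolIntensity q' e - tolIntensity q₁ e)) + 1 := by
        have hc : ∀ e ∈ Finset.univ, tolIntensity q' e - tolIntensity q e =
            (tolIntensity q' e - tolIntensity q₁ e) + (if e = d then 1 else 0) := by
          intro e _
          have h1 := hU1 e
          have h2 := hU' e
          by_cases he : e = d
          · rw [if_pos he] at h1 ⊢
            rw [he] at h1 h2 ⊢
            omega
          · rw [if_neg he] at h1 ⊢; omega
        rw [Finset.sum_congr rfl hc, Finset.sum_add_distrib, Finset.sum_ite_eq' Finset.univ d]
        simp
      have hTsum : ∑ e, (toxProfile q₁ e - toxProfile q' e) =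
          ∑ e, (toxProfile q e - toxProfile q' e) := by
        apply Finset.sum_congr rfl
        intro e _; rw [hT1 e]
      refine Pre0.trans hstep (ih q₁ q' ?_ hU' (fun e => (hT1 e).symm ▸ hT e))
      omega

end Stmt3

/-- `q ⪯₀ q'` iff `U ≤ U'` and `T ≥ T'` componentwise. -/
theorem stmt_3 (D : ℕ) (hD : 1 ≤ D) (q q' : Fin D → ℕ × ℕ) :
    Pre0 D q q' ↔
      (∀ d, tolIntensity q d ≤ tolIntensity q' d) ∧
      (∀ d, toxProfile q' d ≤ toxProfile q d) := by
  constructor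
  · exact Stmt3.forward
  · rintro ⟨hU, hT⟩
    exact Stmt3.backward _ q q' le_rfl hU hT
end

section
/- The map σ taking a tally q = (t₁:u₁, …, t_D:u_D) to the pair (T, U) of its toxicity profile and tolerated dose intensity is injective, and is a monotone embedding of (Q^D, ⪯₀) into (ℕ^D, ≤)^op × (ℕ^D, ≤): q ⪯₀ q' if and only if T ≥ T' and U ≤ U' componentwise. -/
/-- The map `σ : q ↦ (T, U)`. -/
def sigma' {D : ℕ} (q : Fin D → ℕ × ℕ) : (Fin D → ℕ) × (Fin D → ℕ) :=
  (fun d => toxProfile q d, fun d => tolIntensity q d)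


section Aux
variable {D : ℕ}

lemma sgl_fst (j : Fin D) (v : ℕ × ℕ) (i : Fin D) :
    (sgl j v i).1 = if i = j then v.1 else 0 := by
  simp [sgl, Pi.single_apply, apply_ite Prod.fst]

lemma sgl_snd (j : Fin D) (v : ℕ × ℕ) (i : Fin D) :
    (sgl j v i).2 = if i = j then v.2 else 0 := by
  simp [sgl, Pi.single_apply, apply_ite Prod.snd]

lemma tox_add_sgl (q : Fin D → ℕ × ℕ) (j : Fin D) (v : ℕ × ℕ) (d : Fin D) :
    toxProfile (q + sgl j v) d = toxProfile q d + if j ≤ d then v.1 else 0 := by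
  unfold toxProfile
  have h1 : ∀ i : Fin D, ((q + sgl j v) i).1 = (q i).1 + (if i = j then v.1 else 0) := by
    intro i; rw [Pi.add_apply, Prod.fst_add, sgl_fst]
  simp only [h1, Finset.sum_add_distrib]
  congr 1
  rw [Finset.sum_ite_eq' (Finset.univ.filter (fun i => i ≤ d)) j (fun _ => v.1)]
  simp

lemma tol_add_sgl (q : Fin D → ℕ × ℕ) (j : Fin D) (v : ℕ × ℕ) (d : Fin D) :
    tolIntensity (q + sgl j v) d = tolIntensity q d + if d ≤ j then v.2 else 0 := by
  unfold tolIntensity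
  have h1 : ∀ i : Fin D, ((q + sgl j v) i).2 = (q i).2 + (if i = j then v.2 else 0) := by
    intro i; rw [Pi.add_apply, Prod.snd_add, sgl_snd]
  simp only [h1, Finset.sum_add_distrib]
  congr 1
  rw [Finset.sum_ite_eq' (Finset.univ.filter (fun i => d ≤ i)) j (fun _ => v.2)]
  simp

lemma tox_zero (q : Fin D → ℕ × ℕ) (h0 : 0 < D) :
    toxProfile q ⟨0, h0⟩ = (q ⟨0, h0⟩).1 := by
  unfold toxProfile
  rw [show Finset.univ.filter (fun j : Fin D => j ≤ ⟨0, h0⟩) = {⟨0, h0⟩} by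
    ext j; simp only [Finset.mem_filter, Finset.mem_univ, true_and, Finset.mem_singleton, Fin.le_def, Fin.ext_iff]; omega]
  simp

lemma tox_succ (q : Fin D → ℕ × ℕ) (d : Fin D) (hd : 0 < d.1) :
    toxProfile q d = toxProfile q ⟨d.1 - 1, by omega⟩ + (q d).1 := by
  unfold toxProfile
  rw [show Finset.univ.filter (fun j : Fin D => j ≤ d)
      = insert d (Finset.univ.filter (fun j : Fin D => j ≤ ⟨d.1 - 1, by omega⟩)) by
    ext j; simp only [Finset.mem_filter, Finset.mem_univ, true_and, Finset.mem_insert, Finset.mem_singleton, Fin.le_def, Fin.ext_iff]; omega]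
  rw [Finset.sum_insert (by simp [Fin.le_def]; omega)]
  ring

lemma tol_last (q : Fin D → ℕ × ℕ) (h0 : 0 < D) :
    tolIntensity q ⟨D - 1, by omega⟩ = (q ⟨D - 1, by omega⟩).2 := by
  unfold tolIntensity
  rw [show Finset.univ.filter (fun j : Fin D => (⟨D - 1, by omega⟩ : Fin D) ≤ j) = {⟨D - 1, by omega⟩} by
    ext j; simp only [Finset.mem_filter, Finset.mem_univ, true_and, Finset.mem_singleton, Fin.le_def, Fin.ext_iff]
    have := j.2; omega]
  simp

lemma tol_succ (q : Fin D → ℕ × ℕ) (d : Fin D) (hd : d.1 + 1 < D) :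
    tolIntensity q d = (q d).2 + tolIntensity q ⟨d.1 + 1, hd⟩ := by
  unfold tolIntensity
  rw [show Finset.univ.filter (fun j : Fin D => d ≤ j)
      = insert d (Finset.univ.filter (fun j : Fin D => (⟨d.1 + 1, hd⟩ : Fin D) ≤ j)) by
    ext j; simp only [Finset.mem_filter, Finset.mem_univ, true_and, Finset.mem_insert, Finset.mem_singleton, Fin.le_def, Fin.ext_iff]; omega]
  rw [Finset.sum_insert (by simp [Fin.le_def])]

lemma sigma_ext {q q' : Fin D → ℕ × ℕ}
    (hT : ∀ d, toxProfile q d = toxProfile q' d)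
    (hU : ∀ d, tolIntensity q d = tolIntensity q' d) : q = q' := by
  funext d
  have hf : (q d).1 = (q' d).1 := by
    rcases Nat.eq_zero_or_pos d.1 with h0 | h0
    · have hd : d = ⟨0, by omega⟩ := Fin.ext h0
      rw [hd, ← tox_zero q, ← tox_zero q']
      exact hT _
    · have e1 := tox_succ q d h0
      have e2 := tox_succ q' d h0
      have := hT d
      have := hT ⟨d.1 - 1, by omega⟩
      omega
  have hs : (q d).2 = (q' d).2 := by
    rcases lt_or_ge (d.1 + 1) D with h1 | h1
    · have e1 := tol_succ q d h1
      have e2 := tol_succ q' d h1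
      have := hU d
      have := hU ⟨d.1 + 1, h1⟩
      omega
    · have hd : d = ⟨D - 1, by omega⟩ := Fin.ext (by have := d.2; simp; omega)
      rw [hd, ← tol_last q (by omega), ← tol_last q' (by omega)]
      exact hU _
  exact Prod.ext hf hs

end Aux

lemma pre0_forward {D : ℕ} {q q' : Fin D → ℕ × ℕ} (h : Pre0 D q q') :
    (∀ d, toxProfile q' d ≤ toxProfile q d) ∧ (∀ d, tolIntensity q d ≤ tolIntensity q' d) := by
  induction h with
  | tol1 h q =>
      refine ⟨fun d => ?_, fun d => ?_⟩
      · rw [tox_add_sgl]; simp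
      · rw [tol_add_sgl]; exact Nat.le_add_right _ _
  | titro q j h =>
      refine ⟨fun d => ?_, fun d => ?_⟩
      · rw [tox_add_sgl, tox_add_sgl]; simp
      · rw [tol_add_sgl, tol_add_sgl]
        have : (if d ≤ j then (0,1).2 else 0) ≤ (if d ≤ (⟨j.1 + 1, h⟩ : Fin D) then (0,1).2 else 0) := by
          split_ifs with h1 h2 <;> simp only [Fin.le_def] at * <;> omega
        omega
  | titrx q j h =>
      refine ⟨fun d => ?_, fun d => ?_⟩
      · rw [tox_add_sgl, tox_add_sgl]
        have : (if (⟨j.1 + 1, h⟩ : Fin D) ≤ d then (1,0).1 else 0) ≤ (if j ≤ d then (1,0).1 else 0) := by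
          split_ifs with h1 h2 <;> simp only [Fin.le_def] at * <;> omega
        omega
      · rw [tol_add_sgl, tol_add_sgl]; simp
  | det h q =>
      refine ⟨fun d => ?_, fun d => ?_⟩
      · rw [tox_add_sgl]; exact Nat.le_add_right _ _
      · rw [tol_add_sgl]; simp
  | refl q => exact ⟨fun d => le_refl _, fun d => le_refl _⟩
  | trans h1 h2 ih1 ih2 =>
      exact ⟨fun d => (ih2.1 d).trans (ih1.1 d), fun d => (ih1.2 d).trans (ih2.2 d)⟩

lemma decomp_fst {D : ℕ} {q : Fin D → ℕ × ℕ} {d : Fin D} (h : 1 ≤ (q d).1) :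
    q = Function.update q d ((q d).1 - 1, (q d).2) + sgl d (1, 0) := by
  funext i
  by_cases hi : i = d
  · subst hi
    simp only [Pi.add_apply, Function.update_self, sgl, Pi.single_eq_same]
    exact Prod.ext (by simp; omega) (by simp)
  · simp only [Pi.add_apply, Function.update_of_ne hi, sgl, Pi.single_eq_of_ne hi]
    simp

lemma decomp_snd {D : ℕ} {q : Fin D → ℕ × ℕ} {d : Fin D} (h : 1 ≤ (q d).2) :
    q = Function.update q d ((q d).1, (q d).2 - 1) + sgl d (0, 1) := by
  funext i
  by_cases hi : i = d
  · subst hi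
    simp only [Pi.add_apply, Function.update_self, sgl, Pi.single_eq_same]
    exact Prod.ext (by simp) (by simp; omega)
  · simp only [Pi.add_apply, Function.update_of_ne hi, sgl, Pi.single_eq_of_ne hi]
    simp

/-- Helper: one toleration-increasing step plus induction hypothesis. -/
lemma reverse_step_tol {D : ℕ} {n : ℕ} {q q1 q' : Fin D → ℕ × ℕ} {d0 : Fin D}
    (ih : ∀ q q' : Fin D → ℕ × ℕ,
      (∑ d : Fin D, ((toxProfile q d - toxProfile q' d) + (tolIntensity q' d - tolIntensity q d))) ≤ n →
      (∀ d, toxProfile q' d ≤ toxProfile q d) →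
      (∀ d, tolIntensity q d ≤ tolIntensity q' d) → Pre0 D q q')
    (hstep : Pre0 D q q1)
    (hT1 : ∀ d, toxProfile q1 d = toxProfile q d)
    (hU1 : ∀ d, tolIntensity q1 d = tolIntensity q d + (if d = d0 then 1 else 0))
    (hm : (∑ d : Fin D, ((toxProfile q d - toxProfile q' d) + (tolIntensity q' d - tolIntensity q d))) ≤ n + 1)
    (hT : ∀ d, toxProfile q' d ≤ toxProfile q d)
    (hU : ∀ d, tolIntensity q d ≤ tolIntensity q' d)
    (hlt : tolIntensity q d0 < tolIntensity q' d0) :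
    Pre0 D q q' := by
  refine Pre0.trans hstep (ih q1 q' ?_ ?_ ?_)
  · have hsum : (∑ d : Fin D, ((toxProfile q1 d - toxProfile q' d) + (tolIntensity q' d - tolIntensity q1 d)))
        < (∑ d : Fin D, ((toxProfile q d - toxProfile q' d) + (tolIntensity q' d - tolIntensity q d))) := by
      refine Finset.sum_lt_sum (fun i _ => ?_) ⟨d0, Finset.mem_univ d0, ?_⟩
      · rw [hT1 i, hU1 i]; split_ifs <;> omega
      · have h1 := hT1 d0
        have h2 := hU1 d0
        rw [if_pos rfl] at h2
        omega
    omega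
  · intro d; rw [hT1 d]; exact hT d
  · intro d; rw [hU1 d]; split_ifs with h
    · rw [h]; omega
    · simpa using hU d

/-- Helper: one toxicity-decreasing step plus induction hypothesis. -/
lemma reverse_step_tox {D : ℕ} {n : ℕ} {q q1 q' : Fin D → ℕ × ℕ} {d0 : Fin D}
    (ih : ∀ q q' : Fin D → ℕ × ℕ,
      (∑ d : Fin D, ((toxProfile q d - toxProfile q' d) + (tolIntensity q' d - tolIntensity q d))) ≤ n →
      (∀ d, toxProfile q' d ≤ toxProfile q d) →
      (∀ d, tolIntensity q d ≤ tolIntensity q' d) → Pre0 D q q')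
    (hstep : Pre0 D q q1)
    (hT1 : ∀ d, toxProfile q d = toxProfile q1 d + (if d = d0 then 1 else 0))
    (hU1 : ∀ d, tolIntensity q1 d = tolIntensity q d)
    (hm : (∑ d : Fin D, ((toxProfile q d - toxProfile q' d) + (tolIntensity q' d - tolIntensity q d))) ≤ n + 1)
    (hT : ∀ d, toxProfile q' d ≤ toxProfile q d)
    (hU : ∀ d, tolIntensity q d ≤ tolIntensity q' d)
    (hlt : toxProfile q' d0 < toxProfile q d0) :
    Pre0 D q q' := by
  refine Pre0.trans hstep (ih q1 q' ?_ ?_ ?_)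
  · have hsum : (∑ d : Fin D, ((toxProfile q1 d - toxProfile q' d) + (tolIntensity q' d - tolIntensity q1 d)))
        < (∑ d : Fin D, ((toxProfile q d - toxProfile q' d) + (tolIntensity q' d - tolIntensity q d))) := by
      refine Finset.sum_lt_sum (fun i _ => ?_) ⟨d0, Finset.mem_univ d0, ?_⟩
      · have h1 := hT1 i; have h2 := hU1 i; split_ifs at h1 <;> omega
      · have h1 := hT1 d0; rw [if_pos rfl] at h1
        have h2 := hU1 d0; have h3 := hT d0; omega
    omega
  · intro d
    have h1 := hT1 d
    rcases eq_or_ne d d0 with he | he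
    · subst he; rw [if_pos rfl] at h1; have h3 := hlt; omega
    · rw [if_neg he] at h1; have h3 := hT d; omega
  · intro d; rw [hU1 d]; exact hU d

lemma pre0_reverse {D : ℕ} (hD : 0 < D) :
    ∀ (n : ℕ) (q q' : Fin D → ℕ × ℕ),
      (∑ d : Fin D, ((toxProfile q d - toxProfile q' d) + (tolIntensity q' d - tolIntensity q d))) ≤ n →
      (∀ d, toxProfile q' d ≤ toxProfile q d) →
      (∀ d, tolIntensity q d ≤ tolIntensity q' d) →
      Pre0 D q q' := by
  intro n
  induction n with
  | zero =>
    intro q q' hm hT hU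
    rw [Nat.le_zero, Finset.sum_eq_zero_iff] at hm
    have hTe : ∀ d, toxProfile q d = toxProfile q' d := by
      intro d; have := hm d (Finset.mem_univ d); have := hT d; omega
    have hUe : ∀ d, tolIntensity q d = tolIntensity q' d := by
      intro d; have := hm d (Finset.mem_univ d); have := hU d; omega
    rw [sigma_ext hTe hUe]; exact Pre0.refl q'
  | succ n ih =>
    intro q q' hm hT hU
    by_cases hTe : ∀ d, toxProfile q d = toxProfile q' d
    · by_cases hUe : ∀ d, tolIntensity q d = tolIntensity q' d
      · rw [sigma_ext hTe hUe]; exact Pre0.refl q'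
      · -- a toleration-increasing move
        push_neg at hUe
        have hSne : (Finset.univ.filter (fun d : Fin D => tolIntensity q d < tolIntensity q' d)).Nonempty := by
          obtain ⟨d, hd⟩ := hUe
          exact ⟨d, by simp only [Finset.mem_filter, Finset.mem_univ, true_and]
                       exact lt_of_le_of_ne (hU d) hd⟩
        obtain ⟨d0, hd0mem, hdmin⟩ :
            ∃ d0 ∈ Finset.univ.filter (fun d : Fin D => tolIntensity q d < tolIntensity q' d),
              ∀ e ∈ Finset.univ.filter (fun d : Fin D => tolIntensity q d < tolIntensity q' d), d0 ≤ e :=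
          ⟨_, Finset.min'_mem _ hSne, fun e he => Finset.min'_le _ e he⟩
        have hlt : tolIntensity q d0 < tolIntensity q' d0 := (Finset.mem_filter.mp hd0mem).2
        have hmin : ∀ e : Fin D, tolIntensity q e < tolIntensity q' e → d0 ≤ e := fun e he =>
          hdmin e (Finset.mem_filter.mpr ⟨Finset.mem_univ e, he⟩)
        rcases Nat.eq_zero_or_pos d0.1 with h0 | h0
        · -- tol1 move
          have e0 : (⟨0, hD⟩ : Fin D) = d0 := Fin.ext h0.symm
          have hT1 : ∀ d, toxProfile (q + sgl (⟨0, hD⟩ : Fin D) (0, 1)) d = toxProfile q d := by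
            intro d; rw [tox_add_sgl]; simp
          have hU1 : ∀ d, tolIntensity (q + sgl (⟨0, hD⟩ : Fin D) (0, 1)) d
              = tolIntensity q d + (if d = d0 then 1 else 0) := by
            intro d; rw [tol_add_sgl]
            congr 1
            have hv : ((⟨0, hD⟩ : Fin D) : ℕ) = 0 := rfl
            have : d ≤ (⟨0, hD⟩ : Fin D) ↔ d = d0 := by
              rw [Fin.le_def, Fin.ext_iff]; omega
            split_ifs with ha hb hb
            · rfl
            · exact absurd (this.mp ha) hb
            · exact absurd (this.mpr hb) ha
            · rfl
          exact reverse_step_tol ih (Pre0.tol1 hD q) hT1 hU1 hm hT hU hlt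
        · -- titro move
          set d0' : Fin D := ⟨d0.1 - 1, by omega⟩ with hd0'def
          have hv' : (d0' : ℕ) = d0.1 - 1 := rfl
          have hd1 : d0'.1 + 1 < D := by have := d0.2; omega
          have e1 : (⟨d0'.1 + 1, hd1⟩ : Fin D) = d0 := Fin.ext (by simp [hv']; omega)
          have hne' : ¬ tolIntensity q d0' < tolIntensity q' d0' := by
            intro hc
            have := hmin d0' hc
            rw [Fin.le_def] at this; omega
          have heq' : tolIntensity q d0' = tolIntensity q' d0' :=
            le_antisymm (hU d0') (not_lt.mp hne')
          have r1 := tol_succ q d0' hd1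
          have r2 := tol_succ q' d0' hd1
          rw [e1] at r1 r2
          have hu1 : 1 ≤ (q d0').2 := by omega
          have hdec := decomp_snd hu1
          set qr := Function.update q d0' ((q d0').1, (q d0').2 - 1) with hqr
          have hstep : Pre0 D q (qr + sgl d0 (0, 1)) := by
            have h := Pre0.titro qr d0' hd1
            rw [e1] at h
            rw [← hdec] at h
            exact h
          have hT1 : ∀ d, toxProfile (qr + sgl d0 (0, 1)) d = toxProfile q d := by
            intro d
            rw [tox_add_sgl]
            conv_rhs => rw [hdec, tox_add_sgl]
            simp
          have hU1 : ∀ d, tolIntensity (qr + sgl d0 (0, 1)) d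
              = tolIntensity q d + (if d = d0 then 1 else 0) := by
            intro d
            rw [tol_add_sgl]
            conv_rhs => rw [hdec, tol_add_sgl]
            have hsplit : (if d ≤ d0 then ((0, 1) : ℕ × ℕ).2 else 0)
                = (if d ≤ d0' then ((0, 1) : ℕ × ℕ).2 else 0) + (if d = d0 then 1 else 0) := by
              split_ifs with ha hb hb hb hc <;>
                simp only [Fin.le_def, Fin.ext_iff] at * <;> omega
            omega
          exact reverse_step_tol ih hstep hT1 hU1 hm hT hU hlt
    · -- a toxicity-decreasing move
      push_neg at hTe
      have hSne : (Finset.univ.filter (fun d : Fin D => toxProfile q' d < toxProfile q d)).Nonempty := by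
        obtain ⟨d, hd⟩ := hTe
        exact ⟨d, by simp only [Finset.mem_filter, Finset.mem_univ, true_and]
                     exact lt_of_le_of_ne (hT d) (fun h => hd h.symm)⟩
      obtain ⟨d0, hd0mem, hdmin⟩ :
          ∃ d0 ∈ Finset.univ.filter (fun d : Fin D => toxProfile q' d < toxProfile q d),
            ∀ e ∈ Finset.univ.filter (fun d : Fin D => toxProfile q' d < toxProfile q d), d0 ≤ e :=
        ⟨_, Finset.min'_mem _ hSne, fun e he => Finset.min'_le _ e he⟩
      have hlt : toxProfile q' d0 < toxProfile q d0 := (Finset.mem_filter.mp hd0mem).2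
      have hmin : ∀ e : Fin D, toxProfile q' e < toxProfile q e → d0 ≤ e := fun e he =>
        hdmin e (Finset.mem_filter.mpr ⟨Finset.mem_univ e, he⟩)
      -- the toxicity count at d0 is positive
      have ht1 : 1 ≤ (q d0).1 := by
        rcases Nat.eq_zero_or_pos d0.1 with h0 | h0
        · have e0 : (⟨0, hD⟩ : Fin D) = d0 := Fin.ext h0.symm
          have := tox_zero q hD
          rw [e0] at this
          omega
        · set d0' : Fin D := ⟨d0.1 - 1, by omega⟩ with hd0'def
          have r1 := tox_succ q d0 h0
          have r2 := tox_succ q' d0 h0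
          have hne' : ¬ toxProfile q' d0' < toxProfile q d0' := by
            intro hc
            have := hmin d0' hc
            rw [Fin.le_def] at this
            have hv' : (d0' : ℕ) = d0.1 - 1 := rfl
            omega
          have heq' : toxProfile q d0' = toxProfile q' d0' :=
            le_antisymm (not_lt.mp hne') (hT d0')
          rw [show (⟨d0.1 - 1, by omega⟩ : Fin D) = d0' from rfl] at r1 r2
          omega
      have hdec := decomp_fst ht1
      set qr := Function.update q d0 ((q d0).1 - 1, (q d0).2) with hqr
      rcases lt_or_ge (d0.1 + 1) D with hlast | hlast
      · -- titrx move
        have hstep : Pre0 D q (qr + sgl (⟨d0.1 + 1, hlast⟩ : Fin D) (1, 0)) := by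
          have h := Pre0.titrx qr d0 hlast
          rw [← hdec] at h
          exact h
        have hT1 : ∀ d, toxProfile q d
            = toxProfile (qr + sgl (⟨d0.1 + 1, hlast⟩ : Fin D) (1, 0)) d + (if d = d0 then 1 else 0) := by
          intro d
          rw [tox_add_sgl]
          conv_lhs => rw [hdec, tox_add_sgl]
          have hv : ((⟨d0.1 + 1, hlast⟩ : Fin D) : ℕ) = d0.1 + 1 := rfl
          have hsplit : (if d0 ≤ d then ((1, 0) : ℕ × ℕ).1 else 0)
              = (if (⟨d0.1 + 1, hlast⟩ : Fin D) ≤ d then ((1, 0) : ℕ × ℕ).1 else 0) + (if d = d0 then 1 else 0) := by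
            split_ifs with ha hb hb hb hc <;>
              simp only [Fin.le_def, Fin.ext_iff] at * <;> omega
          omega
        have hU1 : ∀ d, tolIntensity (qr + sgl (⟨d0.1 + 1, hlast⟩ : Fin D) (1, 0)) d = tolIntensity q d := by
          intro d
          rw [tol_add_sgl]
          conv_rhs => rw [hdec, tol_add_sgl]
          simp
        exact reverse_step_tox ih hstep hT1 hU1 hm hT hU hlt
      · -- det move
        have e0 : (⟨D - 1, Nat.sub_lt hD Nat.one_pos⟩ : Fin D) = d0 := by
          have := d0.2
          exact Fin.ext (by simp; omega)
        have hstep : Pre0 D q qr := by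
          have h := Pre0.det hD qr
          rw [e0] at h
          rw [← hdec] at h
          exact h
        have hT1 : ∀ d, toxProfile q d = toxProfile qr d + (if d = d0 then 1 else 0) := by
          intro d
          conv_lhs => rw [hdec, tox_add_sgl]
          have hsplit : (if d0 ≤ d then ((1, 0) : ℕ × ℕ).1 else 0) = (if d = d0 then 1 else 0) := by
            have := d.2
            split_ifs with ha hb hb <;>
              simp only [Fin.le_def, Fin.ext_iff] at * <;> omega
          omega
        have hU1 : ∀ d, tolIntensity qr d = tolIntensity q d := by
          intro d
          conv_rhs => rw [hdec, tol_add_sgl]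
          simp
        exact reverse_step_tox ih hstep hT1 hU1 hm hT hU hlt
/-- `σ` is injective and is a monotone embedding of `(Q^D, ⪯₀)` into
`(ℕ^D, ≤)ᵒᵖ × (ℕ^D, ≤)`: `q ⪯₀ q'` iff `T ≥ T'` and `U ≤ U'` componentwise. -/
theorem stmt_4 (D : ℕ) (hD : 1 ≤ D) :
    Function.Injective (sigma' (D := D)) ∧
    (∀ q q' : Fin D → ℕ × ℕ,
      Pre0 D q q' ↔ (sigma' q').1 ≤ (sigma' q).1 ∧ (sigma' q).2 ≤ (sigma' q').2) := by
  have hD0 : 0 < D := hD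
  constructor
  · intro q q' h
    have h1 : ∀ d, toxProfile q d = toxProfile q' d := fun d =>
      congrFun (congrArg Prod.fst h) d
    have h2 : ∀ d, tolIntensity q d = tolIntensity q' d := fun d =>
      congrFun (congrArg Prod.snd h) d
    exact sigma_ext h1 h2
  · intro q q'
    constructor
    · intro h
      obtain ⟨h1, h2⟩ := pre0_forward h
      exact ⟨Pi.le_def.mpr h1, Pi.le_def.mpr h2⟩
    · rintro ⟨h1, h2⟩
      exact pre0_reverse hD0 _ q q' le_rfl (Pi.le_def.mp h1) (Pi.le_def.mp h2)
end

section
/- The preordered set (Q^D, ⪯₀) of dosewise tallies, where q ⪯₀ q' iff U ≤ U' and T ≥ T' componentwise (U the tolerated dose intensity, T the toxicity profile), is a lattice: any two tallies have a meet and a join. -/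
/-- The order `q ⪯₀ q'` on dosewise tallies: `T_d ≥ T'_d` and `U_d ≤ U'_d` for all `d`. -/
def le0 {D : ℕ} (q q' : Fin D → ℕ × ℕ) : Prop :=
  (∀ d, toxProfile q' d ≤ toxProfile q d) ∧ (∀ d, tolIntensity q d ≤ tolIntensity q' d)

/-- First components, extended by 0 to all of ℕ. -/
def af {D : ℕ} (q : Fin D → ℕ × ℕ) (j : ℕ) : ℕ :=
  if h : j < D then (q ⟨j, h⟩).1 else 0

/-- Second components, extended by 0. -/
def bf {D : ℕ} (q : Fin D → ℕ × ℕ) (j : ℕ) : ℕ :=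
  if h : j < D then (q ⟨j, h⟩).2 else 0

/-- Cumulative toxicity, as a function on ℕ. -/
def TA {D : ℕ} (q : Fin D → ℕ × ℕ) (n : ℕ) : ℕ := ∑ j ∈ Finset.range n, af q j

/-- Tail toleration sum, as a function on ℕ. -/
def UB {D : ℕ} (q : Fin D → ℕ × ℕ) (n : ℕ) : ℕ := ∑ j ∈ Finset.Ico n D, bf q j

lemma tox_eq {D : ℕ} (q : Fin D → ℕ × ℕ) (d : Fin D) :
    toxProfile q d = TA q (d.val + 1) := by
  unfold toxProfile TA
  rw [Finset.sum_filter]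
  have h1 : (∑ a : Fin D, if a ≤ d then (q a).1 else 0)
      = ∑ a : Fin D, (fun k => if k ≤ d.val then af q k else 0) a.val := by
    refine Finset.sum_congr rfl (fun j _ => ?_)
    simp only [af, Fin.le_def, j.isLt, dif_pos, Fin.eta]
  rw [h1, Fin.sum_univ_eq_sum_range (fun k => if k ≤ d.val then af q k else 0) D]
  rw [Finset.sum_ite, Finset.sum_const_zero, add_zero]
  apply Finset.sum_congr _ (fun _ _ => rfl)
  ext j
  simp only [Finset.mem_filter, Finset.mem_range]
  have := d.isLt
  omega

lemma tol_eq {D : ℕ} (q : Fin D → ℕ × ℕ) (d : Fin D) :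
    tolIntensity q d = UB q d.val := by
  unfold tolIntensity UB
  rw [Finset.sum_filter]
  have h1 : (∑ a : Fin D, if d ≤ a then (q a).2 else 0)
      = ∑ a : Fin D, (fun k => if d.val ≤ k then bf q k else 0) a.val := by
    refine Finset.sum_congr rfl (fun j _ => ?_)
    simp only [bf, Fin.le_def, j.isLt, dif_pos, Fin.eta]
  rw [h1, Fin.sum_univ_eq_sum_range (fun k => if d.val ≤ k then bf q k else 0) D]
  rw [Finset.sum_ite, Finset.sum_const_zero, add_zero]
  apply Finset.sum_congr _ (fun _ _ => rfl)
  ext j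
  simp only [Finset.mem_filter, Finset.mem_range, Finset.mem_Ico]
  omega

lemma TA_mono {D : ℕ} (q : Fin D → ℕ × ℕ) : Monotone (TA q) := by
  intro a b hab
  exact Finset.sum_le_sum_of_subset (Finset.range_subset_range.2 hab)

lemma UB_anti {D : ℕ} (q : Fin D → ℕ × ℕ) : Antitone (UB q) := by
  intro a b hab
  exact Finset.sum_le_sum_of_subset (Finset.Ico_subset_Ico hab le_rfl)

lemma sum_Ico_tsub (g : ℕ → ℕ) (hg : Antitone g) {m n : ℕ} (hmn : m ≤ n) :
    ∑ j ∈ Finset.Ico m n, (g j - g (j + 1)) = g m - g n := by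
  induction n with
  | zero => interval_cases m; simp
  | succ n ih =>
    rcases Nat.lt_or_ge m (n + 1) with h | h
    · have hm : m ≤ n := by omega
      rw [Finset.sum_Ico_succ_top hm, ih hm]
      have h1 := hg hm
      have h2 := hg (Nat.le_succ n)
      simp only [Nat.succ_eq_add_one] at *
      omega
    · have : m = n + 1 := by omega
      subst this; simp

/-- Generic construction: given monotone `F` with `F 0 = 0` and antitone `G` with `G D = 0`,
build a tally whose toxicity profile is `F (d+1)` and tolerated intensity is `G d`. -/
lemma build {D : ℕ} (F G : ℕ → ℕ) (hF : Monotone F) (hF0 : F 0 = 0)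
    (hG : Antitone G) (hGD : G D = 0) :
    ∃ m : Fin D → ℕ × ℕ, (∀ d : Fin D, toxProfile m d = F (d.val + 1)) ∧
      (∀ d : Fin D, tolIntensity m d = G d.val) := by
  set mfun : Fin D → ℕ × ℕ := fun d => (F (d.val + 1) - F d.val, G d.val - G (d.val + 1)) with hm
  refine ⟨mfun, ?_, ?_⟩
  · intro d
    rw [tox_eq]
    unfold TA
    have key : ∀ j ∈ Finset.range (d.val + 1), af mfun j = F (j + 1) - F j := by
      intro j hj
      have hjD : j < D := by
        have := d.isLt; simp only [Finset.mem_range] at hj; omega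
      simp [af, hjD, hm]
    rw [Finset.sum_congr rfl key, Finset.sum_range_tsub hF, hF0, Nat.sub_zero]
  · intro d
    rw [tol_eq]
    unfold UB
    have key : ∀ j ∈ Finset.Ico d.val D, bf mfun j = G j - G (j + 1) := by
      intro j hj
      simp only [Finset.mem_Ico] at hj
      simp [bf, hj.2, hm]
    rw [Finset.sum_congr rfl key, sum_Ico_tsub G hG (le_of_lt d.isLt), hGD, Nat.sub_zero]

/-- `(Q^D, ⪯₀)` is a lattice: any two tallies have a meet and a join. -/
theorem stmt_5 (D : ℕ) (q q' : Fin D → ℕ × ℕ) :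
    (∃ m : Fin D → ℕ × ℕ, le0 m q ∧ le0 m q' ∧
      ∀ w : Fin D → ℕ × ℕ, le0 w q → le0 w q' → le0 w m) ∧
    (∃ j : Fin D → ℕ × ℕ, le0 q j ∧ le0 q' j ∧
      ∀ w : Fin D → ℕ × ℕ, le0 q w → le0 q' w → le0 j w) := by
  constructor
  · -- meet: T = max, U = min
    obtain ⟨m, hT, hU⟩ := build (D := D) (fun n => max (TA q n) (TA q' n))
      (fun n => min (UB q n) (UB q' n))
      (fun a b hab => max_le_max (TA_mono q hab) (TA_mono q' hab))
      (by simp [TA])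
      (fun a b hab => min_le_min (UB_anti q hab) (UB_anti q' hab))
      (by simp [UB])
    refine ⟨m, ⟨?_, ?_⟩, ⟨?_, ?_⟩, ?_⟩
    · intro d; rw [hT d, tox_eq]; exact le_max_left _ _
    · intro d; rw [hU d, tol_eq]; exact min_le_left _ _
    · intro d; rw [hT d, tox_eq]; exact le_max_right _ _
    · intro d; rw [hU d, tol_eq]; exact min_le_right _ _
    · intro w ⟨hw1, hw2⟩ ⟨hw3, hw4⟩
      constructor
      · intro d; rw [hT d]
        have h1 := hw1 d; have h2 := hw3 d
        simp only [tox_eq] at h1 h2 ⊢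
        exact max_le h1 h2
      · intro d; rw [hU d]
        have h1 := hw2 d; have h2 := hw4 d
        simp only [tol_eq] at h1 h2 ⊢
        exact le_min h1 h2
  · -- join: T = min, U = max
    obtain ⟨m, hT, hU⟩ := build (D := D) (fun n => min (TA q n) (TA q' n))
      (fun n => max (UB q n) (UB q' n))
      (fun a b hab => min_le_min (TA_mono q hab) (TA_mono q' hab))
      (by simp [TA])
      (fun a b hab => max_le_max (UB_anti q hab) (UB_anti q' hab))
      (by simp [UB])
    refine ⟨m, ⟨?_, ?_⟩, ⟨?_, ?_⟩, ?_⟩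
    · intro d; rw [hT d, tox_eq]; exact min_le_left _ _
    · intro d; rw [hU d, tol_eq]; exact le_max_left _ _
    · intro d; rw [hT d, tox_eq]; exact min_le_right _ _
    · intro d; rw [hU d, tol_eq]; exact le_max_right _ _
    · intro w ⟨hw1, hw2⟩ ⟨hw3, hw4⟩
      constructor
      · intro d; rw [hT d]
        have h1 := hw1 d; have h2 := hw3 d
        simp only [tox_eq] at h1 h2 ⊢
        exact le_min h1 h2
      · intro d; rw [hU d]
        have h1 := hw2 d; have h2 := hw4 d
        simp only [tol_eq] at h1 h2 ⊢
        exact max_le h1 h2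
end

section
/- Fix D ≥ 1 and r ≥ 1. For tallies q, q' ∈ Q^D, q ⪯_r q' holds if and only if the unique coefficient vector (η, γ) ∈ ℤ^{2D} representing [q' − q] in the basis (tol₁, titro₂,…,titro_D, exch_{1,2},…,exch_{D−1,D}, bal_r) lies in ℕ^{2D} (all coefficients nonnegative). -/
/-- The monoidal preorder `⪯_r` on dosewise tallies `(ℕ×ℕ)^D` (at each dose a pair
`(t, u)` of toxicity and toleration counts), generated monoidally (i.e. closed under
adding an arbitrary common tally `q` to both sides) by:
tol₁ (add a toleration at dose 1), titroⱼ (move a toleration from dose j−1 to dose j),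
titrxⱼ (move a toxicity from dose j to dose j+1), exch_{j,k} for j < k (replace a
toxicity at dose j plus a toleration at dose k by a toleration at dose j plus a
toxicity at dose k), and bal_r (delete one toxicity together with r tolerations at the
highest dose D), together with reflexivity and transitivity. -/
inductive PreR (D r : ℕ) : (Fin D → ℕ × ℕ) → (Fin D → ℕ × ℕ) → Prop
  | tol1 (h : 0 < D) (q : Fin D → ℕ × ℕ) :
      PreR D r q (q + sgl ⟨0, h⟩ (0, 1))
  | titro (q : Fin D → ℕ × ℕ) (j : Fin D) (h : j.1 + 1 < D) :
      PreR D r (q + sgl j (0, 1)) (q + sgl ⟨j.1 + 1, h⟩ (0, 1))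
  | titrx (q : Fin D → ℕ × ℕ) (j : Fin D) (h : j.1 + 1 < D) :
      PreR D r (q + sgl j (1, 0)) (q + sgl ⟨j.1 + 1, h⟩ (1, 0))
  | exch (q : Fin D → ℕ × ℕ) (j k : Fin D) (h : j < k) :
      PreR D r (q + sgl j (1, 0) + sgl k (0, 1)) (q + sgl j (0, 1) + sgl k (1, 0))
  | bal (h : 0 < D) (q : Fin D → ℕ × ℕ) :
      PreR D r (q + sgl ⟨D - 1, Nat.sub_lt h Nat.one_pos⟩ (1, r)) q
  | refl (q : Fin D → ℕ × ℕ) : PreR D r q q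
  | trans {q q' q'' : Fin D → ℕ × ℕ} : PreR D r q q' → PreR D r q' q'' → PreR D r q q''

/-- `Δt_d = t'_d − t_d`, the dosewise change in toxicity counts. -/
def dt {D : ℕ} (q q' : Fin D → ℕ × ℕ) (d : Fin D) : ℤ :=
  ((q' d).1 : ℤ) - ((q d).1 : ℤ)

/-- `Δn_d = n'_d − n_d` where `n_d = t_d + u_d` is the number of evaluable
participants at dose `d`. -/
def dn {D : ℕ} (q q' : Fin D → ℕ × ℕ) (d : Fin D) : ℤ :=
  (((q' d).1 + (q' d).2 : ℕ) : ℤ) - (((q d).1 + (q d).2 : ℕ) : ℤ)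

lemma sgl_apply {D : ℕ} (j : Fin D) (v : ℕ × ℕ) (d : Fin D) :
    sgl j v d = if d = j then v else 0 := by
  simp [sgl, Pi.single_apply]

lemma dt_add_sgl {D : ℕ} (a : Fin D → ℕ × ℕ) (j : Fin D) (v : ℕ × ℕ) (d : Fin D) :
    dt a (a + sgl j v) d = if d = j then (v.1 : ℤ) else 0 := by
  simp [dt, Pi.add_apply, sgl_apply]
  split <;> simp

lemma dn_add_sgl {D : ℕ} (a : Fin D → ℕ × ℕ) (j : Fin D) (v : ℕ × ℕ) (d : Fin D) :
    dn a (a + sgl j v) d = if d = j then ((v.1 : ℤ) + v.2) else 0 := by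
  simp [dn, Pi.add_apply, sgl_apply]
  split <;> [skip; simp] <;> push_cast <;> ring

lemma dt_sgl_sub {D : ℕ} (a : Fin D → ℕ × ℕ) (j : Fin D) (v : ℕ × ℕ) (d : Fin D) :
    dt (a + sgl j v) a d = -(if d = j then (v.1 : ℤ) else 0) := by
  simp [dt, Pi.add_apply, sgl_apply]
  split <;> simp

lemma dn_sgl_sub {D : ℕ} (a : Fin D → ℕ × ℕ) (j : Fin D) (v : ℕ × ℕ) (d : Fin D) :
    dn (a + sgl j v) a d = -(if d = j then ((v.1 : ℤ) + v.2) else 0) := by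
  simp [dn, Pi.add_apply, sgl_apply]
  split <;> simp <;> push_cast <;> ring

lemma dt_move {D : ℕ} (a : Fin D → ℕ × ℕ) (i i' : Fin D) (v v' : ℕ × ℕ) (d : Fin D) :
    dt (a + sgl i v) (a + sgl i' v') d
      = (if d = i' then (v'.1 : ℤ) else 0) - (if d = i then (v.1 : ℤ) else 0) := by
  simp [dt, Pi.add_apply, sgl_apply]
  split <;> split <;> simp

lemma dn_move {D : ℕ} (a : Fin D → ℕ × ℕ) (i i' : Fin D) (v v' : ℕ × ℕ) (d : Fin D) :
    dn (a + sgl i v) (a + sgl i' v') d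
      = (if d = i' then ((v'.1 : ℤ) + v'.2) else 0) - (if d = i then ((v.1 : ℤ) + v.2) else 0) := by
  simp [dn, Pi.add_apply, sgl_apply]
  split <;> split <;> (try simp only [Prod.fst_zero, Prod.snd_zero, Nat.cast_zero]) <;> (try push_cast) <;> ring

lemma dt_exch {D : ℕ} (a : Fin D → ℕ × ℕ) (j k : Fin D) (hjk : j ≠ k) (d : Fin D) :
    dt (a + sgl j (1,0) + sgl k (0,1)) (a + sgl j (0,1) + sgl k (1,0)) d
      = (if d = k then (1 : ℤ) else 0) - (if d = j then (1 : ℤ) else 0) := by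
  simp [dt, Pi.add_apply, sgl_apply]
  by_cases h1 : d = j <;> by_cases h2 : d = k <;> simp_all

lemma dn_exch {D : ℕ} (a : Fin D → ℕ × ℕ) (j k : Fin D) (hjk : j ≠ k) (d : Fin D) :
    dn (a + sgl j (1,0) + sgl k (0,1)) (a + sgl j (0,1) + sgl k (1,0)) d = 0 := by
  simp [dn, Pi.add_apply, sgl_apply]
  by_cases h1 : d = j <;> by_cases h2 : d = k <;> simp_all <;> push_cast <;> ring

def Coef (D r : ℕ) (hD : 0 < D) (q q' : Fin D → ℕ × ℕ) (η γ : Fin D → ℤ) : Prop :=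
  dt q q' ⟨0, hD⟩ = -γ ⟨0, hD⟩ ∧
  (∀ d : Fin D, ∀ _ : 0 < d.1,
    dt q q' d = γ ⟨d.1 - 1, lt_of_le_of_lt (Nat.sub_le _ _) d.2⟩ - γ d) ∧
  (∀ d : Fin D, ∀ h : d.1 + 1 < D, dn q q' d = η d - η ⟨d.1 + 1, h⟩) ∧
  (∑ d, dn q q' d) = η ⟨0, hD⟩ - (1 + (r : ℤ)) * γ ⟨D - 1, Nat.sub_lt hD Nat.one_pos⟩

lemma sum_ite_one {D : ℕ} (j : Fin D) (c : ℤ) :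
    (∑ d : Fin D, if d = j then c else 0) = c := by
  simp

lemma coef_tol1 {D : ℕ} (r : ℕ) (hD : 0 < D) (a : Fin D → ℕ × ℕ) :
    Coef D r hD a (a + sgl ⟨0, hD⟩ (0, 1)) (Pi.single ⟨0, hD⟩ 1) 0 := by
  refine ⟨?_, ?_, ?_, ?_⟩
  · rw [dt_add_sgl]; simp
  · intro d hd; rw [dt_add_sgl]; simp only [Pi.zero_apply, Fin.ext_iff]
    split_ifs with h <;> (try contradiction) <;> omega
  · intro d h; rw [dn_add_sgl]
    simp only [Pi.single_apply, Fin.ext_iff]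
    split_ifs <;> (try contradiction) <;> omega
  · rw [Finset.sum_congr rfl (fun d _ => dn_add_sgl a _ _ d), sum_ite_one]
    simp [Pi.single_apply]

lemma coef_titro {D : ℕ} (r : ℕ) (hD : 0 < D) (a : Fin D → ℕ × ℕ) (j : Fin D)
    (h : j.1 + 1 < D) :
    Coef D r hD (a + sgl j (0, 1)) (a + sgl ⟨j.1 + 1, h⟩ (0, 1))
      (Pi.single ⟨j.1 + 1, h⟩ 1) 0 := by
  refine ⟨?_, ?_, ?_, ?_⟩
  · rw [dt_move]; simp only [Pi.zero_apply, Fin.ext_iff]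
    split_ifs <;> (try contradiction) <;> omega
  · intro d hd; rw [dt_move]; simp only [Pi.zero_apply, Fin.ext_iff]
    split_ifs <;> (try contradiction) <;> omega
  · intro d hd; rw [dn_move]
    simp only [Pi.single_apply, Fin.ext_iff]
    split_ifs <;> (try contradiction) <;> omega
  · rw [Finset.sum_congr rfl (fun d _ => dn_move a _ _ _ _ d), Finset.sum_sub_distrib,
      sum_ite_one, sum_ite_one]
    simp only [Pi.single_apply, Pi.zero_apply, Fin.ext_iff]
    split_ifs <;> (try contradiction) <;> omega

lemma coef_titrx {D : ℕ} (r : ℕ) (hD : 0 < D) (a : Fin D → ℕ × ℕ) (j : Fin D)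
    (h : j.1 + 1 < D) :
    Coef D r hD (a + sgl j (1, 0)) (a + sgl ⟨j.1 + 1, h⟩ (1, 0))
      (Pi.single ⟨j.1 + 1, h⟩ 1) (Pi.single j 1) := by
  refine ⟨?_, ?_, ?_, ?_⟩
  · rw [dt_move]; simp only [Pi.single_apply, Fin.ext_iff]
    split_ifs <;> (try contradiction) <;> omega
  · intro d hd; rw [dt_move]; simp only [Pi.single_apply, Fin.ext_iff]
    split_ifs <;> (try contradiction) <;> omega
  · intro d hd; rw [dn_move]
    simp only [Pi.single_apply, Fin.ext_iff]
    split_ifs <;> (try contradiction) <;> omega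
  · rw [Finset.sum_congr rfl (fun d _ => dn_move a _ _ _ _ d), Finset.sum_sub_distrib,
      sum_ite_one, sum_ite_one]
    simp only [Pi.single_apply, Fin.ext_iff]
    split_ifs <;> (try contradiction) <;> (try omega) <;> (try push_cast) <;> nlinarith [Nat.cast_nonneg (α := ℤ) r]

lemma coef_exch {D : ℕ} (r : ℕ) (hD : 0 < D) (a : Fin D → ℕ × ℕ) (j k : Fin D)
    (hjk : j < k) :
    Coef D r hD (a + sgl j (1, 0) + sgl k (0, 1)) (a + sgl j (0, 1) + sgl k (1, 0))
      0 (fun e => if j ≤ e ∧ e < k then 1 else 0) := by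
  have hne : j ≠ k := ne_of_lt hjk
  refine ⟨?_, ?_, ?_, ?_⟩
  · rw [dt_exch a j k hne]
    simp only [Fin.ext_iff, Fin.le_def, Fin.lt_def]
    split_ifs <;> (try contradiction) <;> omega
  · intro d hd; rw [dt_exch a j k hne]
    simp only [Fin.ext_iff, Fin.le_def, Fin.lt_def] at *
    split_ifs <;> (try contradiction) <;> omega
  · intro d hd; rw [dn_exch a j k hne]
    simp only [Pi.zero_apply]; ring
  · rw [Finset.sum_congr rfl (fun d _ => dn_exch a j k hne d)]
    simp only [Pi.zero_apply, Finset.sum_const_zero, Fin.le_def, Fin.lt_def]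
    split_ifs <;> (try contradiction) <;> (try omega) <;> simp_all [Fin.lt_def] <;> nlinarith [Nat.cast_nonneg (α := ℤ) r]

lemma coef_bal {D : ℕ} (r : ℕ) (hD : 0 < D) (a : Fin D → ℕ × ℕ) :
    Coef D r hD (a + sgl ⟨D - 1, Nat.sub_lt hD Nat.one_pos⟩ (1, r)) a
      0 (Pi.single ⟨D - 1, Nat.sub_lt hD Nat.one_pos⟩ 1) := by
  refine ⟨?_, ?_, ?_, ?_⟩
  · rw [dt_sgl_sub]; simp only [Pi.single_apply, Fin.ext_iff]
    split_ifs <;> (try contradiction) <;> omega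
  · intro d hd; rw [dt_sgl_sub]; simp only [Pi.single_apply, Fin.ext_iff]
    split_ifs <;> (try contradiction) <;> omega
  · intro d hd; rw [dn_sgl_sub]; simp only [Pi.single_apply, Pi.zero_apply, Fin.ext_iff]
    split_ifs <;> (try contradiction) <;> omega
  · rw [Finset.sum_congr rfl (fun d _ => dn_sgl_sub a _ _ d)]
    rw [Finset.sum_neg_distrib, sum_ite_one]
    simp [Pi.single_apply]
    try ring

lemma dt_trans {D : ℕ} (q q' q'' : Fin D → ℕ × ℕ) (d : Fin D) :
    dt q q'' d = dt q q' d + dt q' q'' d := by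
  simp [dt]

lemma dn_trans {D : ℕ} (q q' q'' : Fin D → ℕ × ℕ) (d : Fin D) :
    dn q q'' d = dn q q' d + dn q' q'' d := by
  simp [dn]

lemma coef_add {D r : ℕ} {hD : 0 < D} {q q₁ q' : Fin D → ℕ × ℕ} {η γ η₀ γ₀ : Fin D → ℤ}
    (h1 : Coef D r hD q q₁ η₀ γ₀) (h : Coef D r hD q₁ q' η γ) :
    Coef D r hD q q' (η + η₀) (γ + γ₀) := by
  obtain ⟨a1, a2, a3, a4⟩ := h1
  obtain ⟨b1, b2, b3, b4⟩ := h
  refine ⟨?_, ?_, ?_, ?_⟩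
  · rw [dt_trans q q₁ q', a1, b1]; simp only [Pi.add_apply]; ring
  · intro d hd; rw [dt_trans q q₁ q', a2 d hd, b2 d hd]; simp only [Pi.add_apply]; ring
  · intro d hd; rw [dn_trans q q₁ q', a3 d hd, b3 d hd]; simp only [Pi.add_apply]; ring
  · have : ∑ d, dn q q' d = (∑ d, dn q q₁ d) + ∑ d, dn q₁ q' d := by
      rw [← Finset.sum_add_distrib]
      exact Finset.sum_congr rfl fun d _ => dn_trans q q₁ q' d
    rw [this, a4, b4]; simp only [Pi.add_apply]; ring

lemma coef_sub {D r : ℕ} {hD : 0 < D} {q q₁ q' : Fin D → ℕ × ℕ} {η γ η₀ γ₀ : Fin D → ℤ}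
    (h1 : Coef D r hD q q₁ η₀ γ₀) (h : Coef D r hD q q' η γ) :
    Coef D r hD q₁ q' (η - η₀) (γ - γ₀) := by
  obtain ⟨a1, a2, a3, a4⟩ := h1
  obtain ⟨b1, b2, b3, b4⟩ := h
  have hdt : ∀ d, dt q₁ q' d = dt q q' d - dt q q₁ d := by
    intro d; have := dt_trans q q₁ q' d; omega
  have hdn : ∀ d, dn q₁ q' d = dn q q' d - dn q q₁ d := by
    intro d; have := dn_trans q q₁ q' d; omega
  refine ⟨?_, ?_, ?_, ?_⟩
  · rw [hdt, a1, b1]; simp only [Pi.sub_apply]; ring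
  · intro d hd; rw [hdt, a2 d hd, b2 d hd]; simp only [Pi.sub_apply]; ring
  · intro d hd; rw [hdn, a3 d hd, b3 d hd]; simp only [Pi.sub_apply]; ring
  · have : ∑ d, dn q₁ q' d = (∑ d, dn q q' d) - ∑ d, dn q q₁ d := by
      rw [← Finset.sum_sub_distrib]
      exact Finset.sum_congr rfl fun d _ => hdn d
    rw [this, a4, b4]; simp only [Pi.sub_apply]; ring

lemma dn_last {D r : ℕ} {hD : 0 < D} {q q' : Fin D → ℕ × ℕ} {η γ : Fin D → ℤ}
    (hc : Coef D r hD q q' η γ) :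
    dn q q' ⟨D - 1, Nat.sub_lt hD Nat.one_pos⟩
      = η ⟨D - 1, Nat.sub_lt hD Nat.one_pos⟩
        - (1 + (r : ℤ)) * γ ⟨D - 1, Nat.sub_lt hD Nat.one_pos⟩ := by
  obtain ⟨-, -, h3, h4⟩ := hc
  set f : ℕ → ℤ := fun i => if h : i < D then dn q q' ⟨i, h⟩ else 0 with hf
  set g : ℕ → ℤ := fun i => if h : i < D then η ⟨i, h⟩ else 0 with hg
  have hsum : ∑ d, dn q q' d = ∑ i ∈ Finset.range D, f i := by
    rw [← Fin.sum_univ_eq_sum_range]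
    exact Finset.sum_congr rfl fun d _ => by simp [hf]
  have hD' : D = (D - 1) + 1 := by omega
  have hsplit : ∑ i ∈ Finset.range D, f i
      = (∑ i ∈ Finset.range (D - 1), f i) + f (D - 1) := by
    conv_lhs => rw [hD', Finset.sum_range_succ]
  have htel : ∑ i ∈ Finset.range (D - 1), f i = g 0 - g (D - 1) := by
    rw [← Finset.sum_range_sub' g (D - 1)]
    refine Finset.sum_congr rfl fun i hi => ?_
    have hi' : i < D - 1 := Finset.mem_range.mp hi
    have h1 : i < D := by omega
    have h2 : i + 1 < D := by omega
    simp only [hf, hg, dif_pos h1, dif_pos h2]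
    exact h3 ⟨i, h1⟩ h2
  have hfval : f (D - 1) = dn q q' ⟨D - 1, Nat.sub_lt hD Nat.one_pos⟩ := by
    simp [hf, Nat.sub_lt hD Nat.one_pos]
  have hg0 : g 0 = η ⟨0, hD⟩ := by simp [hg, hD]
  have hgD : g (D - 1) = η ⟨D - 1, Nat.sub_lt hD Nat.one_pos⟩ := by
    simp [hg, Nat.sub_lt hD Nat.one_pos]
  rw [hsum, hsplit, htel, hfval, hg0, hgD] at h4
  linarith

lemma decomp {D : ℕ} (q : Fin D → ℕ × ℕ) (j : Fin D) (v : ℕ × ℕ)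
    (h1 : v.1 ≤ (q j).1) (h2 : v.2 ≤ (q j).2) :
    ∃ a, q = a + sgl j v ∧ ∀ e, e ≠ j → a e = q e := by
  refine ⟨fun e => if e = j then ((q j).1 - v.1, (q j).2 - v.2) else q e, ?_, ?_⟩
  · funext e
    by_cases he : e = j
    · subst he
      simp only [Pi.add_apply, sgl_apply, if_pos rfl]
      ext <;> simp <;> omega
    · simp [Pi.add_apply, sgl_apply, he]
  · intro e he; simp [he]

lemma tox_at_min {D r : ℕ} {hD : 0 < D} {q q' : Fin D → ℕ × ℕ} {η γ : Fin D → ℤ}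
    (hc : Coef D r hD q q' η γ) (j : Fin D) (hγj : 1 ≤ γ j)
    (hmin : ∀ e, e < j → γ e = 0) : 1 ≤ (q j).1 := by
  obtain ⟨h1, h2, -, -⟩ := hc
  by_cases hj0 : j.1 = 0
  · have hj : j = ⟨0, hD⟩ := Fin.ext hj0
    rw [← hj] at h1
    have : ((q' j).1 : ℤ) - ((q j).1 : ℤ) = -γ j := h1
    omega
  · have hd : 0 < j.1 := Nat.pos_of_ne_zero hj0
    have h2' := h2 j hd
    have hz : γ ⟨j.1 - 1, lt_of_le_of_lt (Nat.sub_le _ _) j.2⟩ = 0 :=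
      hmin _ (by simp [Fin.lt_def]; omega)
    rw [hz] at h2'
    have : ((q' j).1 : ℤ) - ((q j).1 : ℤ) = 0 - γ j := h2'
    omega

def GX {D : ℕ} (f : Fin D → ℤ) (i : ℕ) : ℤ := if h : i < D then f ⟨i, h⟩ else 0
def TX {D : ℕ} (q : Fin D → ℕ × ℕ) (i : ℕ) : ℤ := if h : i < D then ((q ⟨i, h⟩).1 : ℤ) else 0
def UX {D : ℕ} (q : Fin D → ℕ × ℕ) (i : ℕ) : ℤ := if h : i < D then ((q ⟨i, h⟩).2 : ℤ) else 0

lemma GX_fin {D : ℕ} (f : Fin D → ℤ) (d : Fin D) : GX f d.1 = f d := by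
  rw [GX, dif_pos d.2]
lemma TX_fin {D : ℕ} (q : Fin D → ℕ × ℕ) (d : Fin D) : TX q d.1 = ((q d).1 : ℤ) := by
  rw [TX, dif_pos d.2]
lemma UX_fin {D : ℕ} (q : Fin D → ℕ × ℕ) (d : Fin D) : UX q d.1 = ((q d).2 : ℤ) := by
  rw [UX, dif_pos d.2]
lemma GX_nonneg {D : ℕ} {f : Fin D → ℤ} (hf : ∀ d, 0 ≤ f d) (i : ℕ) : 0 ≤ GX f i := by
  rw [GX]; split <;> simp [hf]
lemma TX_nonneg {D : ℕ} (q : Fin D → ℕ × ℕ) (i : ℕ) : 0 ≤ TX q i := by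
  rw [TX]; split <;> positivity
lemma UX_nonneg {D : ℕ} (q : Fin D → ℕ × ℕ) (i : ℕ) : 0 ≤ UX q i := by
  rw [UX]; split <;> positivity

lemma coef_nat {D r : ℕ} {hD : 0 < D} {q q' : Fin D → ℕ × ℕ} {η γ : Fin D → ℤ}
    (hc : Coef D r hD q q' η γ) :
    (TX q' 0 - TX q 0 = -GX γ 0) ∧
    (∀ i, i + 1 < D → TX q' (i + 1) - TX q (i + 1) = GX γ i - GX γ (i + 1)) ∧
    (∀ i, i + 1 < D → (TX q' i + UX q' i) - (TX q i + UX q i) = GX η i - GX η (i + 1)) ∧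
    ((TX q' (D - 1) + UX q' (D - 1)) - (TX q (D - 1) + UX q (D - 1))
        = GX η (D - 1) - (1 + (r : ℤ)) * GX γ (D - 1)) := by
  have hlast := dn_last hc
  obtain ⟨h1, h2, h3, -⟩ := hc
  have hDpos : D - 1 < D := Nat.sub_lt hD Nat.one_pos
  refine ⟨?_, ?_, ?_, ?_⟩
  · have := h1
    rw [dt] at this
    rw [TX, TX, GX, dif_pos hD, dif_pos hD, dif_pos hD]
    exact this
  · intro i hi
    have h0 : i < D := by omega
    have := h2 ⟨i + 1, hi⟩ (Nat.succ_pos i)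
    rw [dt] at this
    have hidx : (⟨(⟨i + 1, hi⟩ : Fin D).1 - 1,
        lt_of_le_of_lt (Nat.sub_le _ _) (⟨i + 1, hi⟩ : Fin D).2⟩ : Fin D) = ⟨i, h0⟩ :=
      Fin.ext (by simp)
    rw [hidx] at this
    rw [TX, TX, GX, GX, dif_pos hi, dif_pos hi, dif_pos h0, dif_pos hi]
    exact this
  · intro i hi
    have h0 : i < D := by omega
    have := h3 ⟨i, h0⟩ hi
    rw [dn] at this
    rw [TX, TX, UX, UX, GX, GX, dif_pos h0, dif_pos h0, dif_pos h0, dif_pos h0,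
      dif_pos h0, dif_pos hi]
    push_cast at this
    linarith [this]
  · rw [dn] at hlast
    rw [TX, TX, UX, UX, GX, GX, dif_pos hDpos, dif_pos hDpos, dif_pos hDpos, dif_pos hDpos,
      dif_pos hDpos, dif_pos hDpos]
    push_cast at hlast
    linarith [hlast]

lemma exch_exists {D r : ℕ} {hD : 0 < D} {q q' : Fin D → ℕ × ℕ} {η γ : Fin D → ℤ}
    (hη : ∀ d, 0 ≤ η d) (hγ : ∀ d, 0 ≤ γ d)
    (hc : Coef D r hD q q' η γ) (j : Fin D) (hj1 : j.1 + 1 < D)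
    (hγj : 1 ≤ γ j) (hη1 : η ⟨j.1 + 1, hj1⟩ = 0) :
    ∃ k : Fin D, j < k ∧ (∀ e, j ≤ e → e < k → 1 ≤ γ e) ∧ 1 ≤ (q k).2 := by
  by_contra hcon
  push_neg at hcon
  obtain ⟨hE1, hE2, hE3, hE4⟩ := coef_nat hc
  have HU : ∀ kk : ℕ, j.1 < kk → ∀ h2 : kk < D,
      (∀ i, j.1 ≤ i → i < kk → 1 ≤ GX γ i) → UX q kk = 0 := by
    intro kk h1 h2 h3
    have hlt : j < (⟨kk, h2⟩ : Fin D) := by rw [Fin.lt_def]; exact h1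
    have := hcon ⟨kk, h2⟩ hlt (fun e he1 he2 => by
      have h4 := h3 e.1 (Fin.le_def.mp he1) (Fin.lt_def.mp he2)
      rwa [GX_fin] at h4)
    rw [UX, dif_pos h2]
    omega
  have hGj : 1 ≤ GX γ j.1 := by rw [GX_fin]; exact hγj
  have hEj1 : GX η (j.1 + 1) = 0 := by rw [GX, dif_pos hj1]; exact hη1
  have C : ∀ n : ℕ, j.1 + n + 1 ≤ D - 1 →
      (∀ i, j.1 ≤ i → i ≤ j.1 + n → 1 ≤ GX γ i) ∧
      GX γ j.1 ≤ GX γ (j.1 + n) - GX η (j.1 + n + 1) := by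
    intro n
    induction n with
    | zero =>
      intro _
      refine ⟨fun i h1 h2 => ?_, ?_⟩
      · have : i = j.1 := by omega
        subst this; exact hGj
      · simp only [Nat.add_zero]
        rw [hEj1]
        omega
    | succ n ih =>
      intro hn
      obtain ⟨ihp, ihW⟩ := ih (by omega)
      have hass : j.1 + (n + 1) = j.1 + n + 1 := by omega
      rw [hass]
      have hu : UX q (j.1 + n + 1) = 0 :=
        HU (j.1 + n + 1) (by omega) (by omega) (fun i h1 h2 => ihp i h1 (by omega))
      have ht := hE2 (j.1 + n) (by omega)
      have h3 := hE3 (j.1 + n + 1) (by omega)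
      have hu'n := UX_nonneg q' (j.1 + n + 1)
      have htn := TX_nonneg q (j.1 + n + 1)
      have ht'n := TX_nonneg q' (j.1 + n + 1)
      have hen := GX_nonneg hη (j.1 + n + 1 + 1)
      have hen2 := GX_nonneg hη (j.1 + n + 1)
      refine ⟨fun i h1 h2 => ?_, by omega⟩
      by_cases h' : i ≤ j.1 + n
      · exact ihp i h1 h'
      · have : i = j.1 + n + 1 := by omega
        subst this
        omega
  -- final contradiction at the top dose
  obtain ⟨pos, W⟩ := C (D - 2 - j.1) (by omega)
  have e1 : j.1 + (D - 2 - j.1) = D - 2 := by omega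
  rw [e1] at pos W
  have e2 : D - 2 + 1 = D - 1 := by omega
  rw [e2] at W
  have hu : UX q (D - 1) = 0 :=
    HU (D - 1) (by omega) (by omega) (fun i h1 h2 => pos i h1 (by omega))
  have ht := hE2 (D - 2) (by omega)
  rw [e2] at ht
  have hP : 0 ≤ (r : ℤ) * GX γ (D - 1) := mul_nonneg (by positivity) (GX_nonneg hγ _)
  have hPe : (1 + (r : ℤ)) * GX γ (D - 1) = GX γ (D - 1) + (r : ℤ) * GX γ (D - 1) := by ring
  rw [hPe] at hE4
  have hu'n := UX_nonneg q' (D - 1)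
  have hen := GX_nonneg hη (D - 1)
  have hgn := GX_nonneg hγ (D - 1)
  omega

lemma single_nonneg' {D : ℕ} (j : Fin D) : ∀ d, 0 ≤ (Pi.single j 1 : Fin D → ℤ) d := by
  intro d; rw [Pi.single_apply]; split <;> norm_num

lemma single_le {D : ℕ} {f : Fin D → ℤ} (hf : ∀ d, 0 ≤ f d) (j : Fin D) (hj : 1 ≤ f j) :
    ∀ d, (Pi.single j 1 : Fin D → ℤ) d ≤ f d := by
  intro d; rw [Pi.single_apply]; split_ifs with h
  · rw [h]; exact hj
  · exact hf d

lemma one_le_sum {D : ℕ} {f : Fin D → ℤ} (hf : ∀ d, 0 ≤ f d) (j : Fin D) (hj : 1 ≤ f j) :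
    1 ≤ ∑ d, f d :=
  le_trans hj (Finset.single_le_sum (fun d _ => hf d) (Finset.mem_univ j))

lemma forward {D r : ℕ} (hD : 0 < D) {q q' : Fin D → ℕ × ℕ} (h : PreR D r q q') :
    ∃ η γ : Fin D → ℤ, (∀ d, 0 ≤ η d) ∧ (∀ d, 0 ≤ γ d) ∧ Coef D r hD q q' η γ := by
  induction h with
  | tol1 h a =>
    exact ⟨_, _, single_nonneg' _, fun d => le_refl 0, coef_tol1 r hD a⟩
  | titro a j h =>
    exact ⟨_, _, single_nonneg' _, fun d => le_refl 0, coef_titro r hD a j h⟩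
  | titrx a j h =>
    exact ⟨_, _, single_nonneg' _, single_nonneg' _, coef_titrx r hD a j h⟩
  | exch a j k h =>
    refine ⟨_, _, fun d => le_refl 0, fun d => ?_, coef_exch r hD a j k h⟩
    split <;> norm_num
  | bal h a =>
    exact ⟨_, _, fun d => le_refl 0, single_nonneg' _, coef_bal r hD a⟩
  | refl a =>
    refine ⟨0, 0, fun d => le_refl 0, fun d => le_refl 0, ?_, ?_, ?_, ?_⟩
    · simp [dt]
    · intro d hd; simp [dt]
    · intro d hd; simp [dn]
    · simp [dn]
  | trans h1 h2 ih1 ih2 =>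
    obtain ⟨η₁, γ₁, n1, n2, c1⟩ := ih1
    obtain ⟨η₂, γ₂, n3, n4, c2⟩ := ih2
    exact ⟨η₂ + η₁, γ₂ + γ₁, fun d => add_nonneg (n3 d) (n1 d),
      fun d => add_nonneg (n4 d) (n2 d), coef_add c1 c2⟩

lemma backward {D r : ℕ} (hD : 0 < D) (hr : 1 ≤ r) :
    ∀ N : ℕ, ∀ q q' : Fin D → ℕ × ℕ, ∀ η γ : Fin D → ℤ,
      (∀ d, 0 ≤ η d) → (∀ d, 0 ≤ γ d) → Coef D r hD q q' η γ →
      (∑ d, (η d + γ d)) = (N : ℤ) → PreR D r q q' := by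
  intro N
  induction N using Nat.strong_induction_on with
  | _ N IH =>
  intro q q' η γ hη hγ hc hN
  have doStep : ∀ (q₁ : Fin D → ℕ × ℕ) (η₀ γ₀ : Fin D → ℤ),
      PreR D r q q₁ → Coef D r hD q q₁ η₀ γ₀ →
      (∀ d, 0 ≤ η₀ d) → (∀ d, 0 ≤ γ₀ d) →
      (∀ d, η₀ d ≤ η d) → (∀ d, γ₀ d ≤ γ d) →
      1 ≤ ∑ d, (η₀ d + γ₀ d) → PreR D r q q' := by
    intro q₁ η₀ γ₀ hs hc0 k1 k2 k3 k4 k5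
    have hc' := coef_sub hc0 hc
    have hsum : ∑ d, ((η - η₀) d + (γ - γ₀) d) = (N : ℤ) - ∑ d, (η₀ d + γ₀ d) := by
      rw [← hN, ← Finset.sum_sub_distrib]
      exact Finset.sum_congr rfl fun d _ => by simp only [Pi.sub_apply]; ring
    have hnn : 0 ≤ ∑ d, ((η - η₀) d + (γ - γ₀) d) :=
      Finset.sum_nonneg fun d _ => by
        simp only [Pi.sub_apply]
        have := k3 d; have := k4 d; omega
    obtain ⟨cn, hcn⟩ : ∃ cn : ℕ, (cn : ℤ) = ∑ d, (η₀ d + γ₀ d) :=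
      ⟨(∑ d, (η₀ d + γ₀ d)).toNat, Int.toNat_of_nonneg (by omega)⟩
    have hlt : N - cn < N := by omega
    refine hs.trans (IH (N - cn) hlt q₁ q' (η - η₀) (γ - γ₀) ?_ ?_ hc' ?_)
    · intro d; simp only [Pi.sub_apply]; have := k3 d; omega
    · intro d; simp only [Pi.sub_apply]; have := k4 d; omega
    · rw [hsum, ← hcn]
      push_cast
      omega
  have caseC : ∀ j : Fin D, γ j ≠ 0 → (∀ e, e < j → γ e = 0) →
      ∀ hj1 : j.1 + 1 < D, 1 ≤ η ⟨j.1 + 1, hj1⟩ → PreR D r q q' := by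
    intro j hjne hjmin hj1 hη1
    have hγj : 1 ≤ γ j := by have := hγ j; omega
    have htj : 1 ≤ (q j).1 := tox_at_min hc j hγj hjmin
    obtain ⟨a, ha, -⟩ := decomp q j (1, 0) (by simpa using htj) (by simp)
    have move := PreR.titrx (D := D) (r := r) a j hj1
    have coef := coef_titrx (D := D) r hD a j hj1
    rw [← ha] at move coef
    refine doStep _ _ _ move coef (single_nonneg' _) (single_nonneg' _)
      (single_le hη _ hη1) (single_le hγ _ hγj) ?_
    refine one_le_sum (fun d => add_nonneg (single_nonneg' _ d) (single_nonneg' _ d))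
      ⟨j.1 + 1, hj1⟩ ?_
    rw [Pi.single_eq_same, Pi.single_apply]
    split_ifs <;> norm_num
  have caseD : ∀ j : Fin D, γ j ≠ 0 → (∀ e, e < j → γ e = 0) →
      ∀ hj1 : j.1 + 1 < D, η ⟨j.1 + 1, hj1⟩ = 0 → PreR D r q q' := by
    intro j hjne hjmin hj1 hη1
    have hγj : 1 ≤ γ j := by have := hγ j; omega
    have htj : 1 ≤ (q j).1 := tox_at_min hc j hγj hjmin
    obtain ⟨k, hjk, hrange, huk⟩ := exch_exists hη hγ hc j hj1 hγj hη1
    obtain ⟨b, hb, hbe⟩ := decomp q k (0, 1) (by simp) (by simpa using huk)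
    have hbj : b j = q j := hbe j (ne_of_lt hjk)
    obtain ⟨a, ha, -⟩ := decomp b j (1, 0) (by rw [hbj]; simpa using htj) (by simp)
    rw [ha] at hb
    have move := PreR.exch (D := D) (r := r) a j k hjk
    have coef := coef_exch (D := D) r hD a j k hjk
    rw [← hb] at move coef
    refine doStep _ 0 (fun e => if j ≤ e ∧ e < k then 1 else 0) move coef
      (fun d => le_refl 0) (fun d => by split <;> norm_num)
      (fun d => hη d) (fun d => ?_) ?_
    · split_ifs with h
      · exact hrange d h.1 h.2
      · exact hγ d
    · refine one_le_sum (fun d => add_nonneg (le_refl (0:ℤ))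
        (by split <;> norm_num)) j ?_
      simp [le_refl, hjk]
  have caseE : (∀ d, η d = 0) → ∀ j : Fin D, γ j ≠ 0 → (∀ e, e < j → γ e = 0) →
      j.1 = D - 1 → PreR D r q q' := by
    intro hηz j hjne hjmin hjv
    have hγj : 1 ≤ γ j := by have := hγ j; omega
    have htj : 1 ≤ (q j).1 := tox_at_min hc j hγj hjmin
    obtain ⟨hE1, hE2, hE3, hE4⟩ := coef_nat hc
    have hgD : GX γ (D - 1) = γ j := by rw [← hjv, GX_fin]
    have heD : GX η (D - 1) = 0 := by
      rw [GX, dif_pos (Nat.sub_lt hD Nat.one_pos)]; exact hηz _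
    have hdt : TX q' (D - 1) - TX q (D - 1) = -GX γ (D - 1) := by
      rcases Nat.lt_or_ge D 2 with h2 | h2
      · have h0 : D - 1 = 0 := by omega
        rw [h0]; exact hE1
      · have h5 := hE2 (D - 2) (by omega)
        rw [show D - 2 + 1 = D - 1 by omega] at h5
        have hz : GX γ (D - 2) = 0 := by
          rw [GX, dif_pos (show D - 2 < D by omega)]
          exact hjmin _ (Fin.lt_def.mpr (show D - 2 < j.1 by omega))
        rw [hz] at h5; linarith
    have hrr : (r : ℤ) ≤ (r : ℤ) * GX γ (D - 1) := by
      refine le_mul_of_one_le_right (by positivity) ?_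
      rw [hgD]; exact hγj
    have hPe : (1 + (r : ℤ)) * GX γ (D - 1) = GX γ (D - 1) + (r : ℤ) * GX γ (D - 1) := by
      ring
    rw [hPe, heD] at hE4
    have hu'n := UX_nonneg q' (D - 1)
    have huL : (r : ℤ) ≤ UX q (D - 1) := by omega
    have hjL : j = (⟨D - 1, Nat.sub_lt hD Nat.one_pos⟩ : Fin D) := Fin.ext hjv
    have huL' : r ≤ (q (⟨D - 1, Nat.sub_lt hD Nat.one_pos⟩ : Fin D)).2 := by
      have h6 : UX q (D - 1) = ((q (⟨D - 1, Nat.sub_lt hD Nat.one_pos⟩ : Fin D)).2 : ℤ) := by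
        rw [UX, dif_pos (Nat.sub_lt hD Nat.one_pos)]
      omega
    rw [hjL] at htj hγj
    obtain ⟨a, ha, -⟩ := decomp q ⟨D - 1, Nat.sub_lt hD Nat.one_pos⟩ (1, r)
      (by simpa using htj) (by simpa using huL')
    have move := PreR.bal (D := D) (r := r) hD a
    have coef := coef_bal (D := D) r hD a
    rw [← ha] at move coef
    refine doStep _ 0 (Pi.single ⟨D - 1, Nat.sub_lt hD Nat.one_pos⟩ 1) move coef
      (fun d => le_refl 0) (single_nonneg' _)
      (fun d => hη d) (single_le hγ _ hγj) ?_
    refine one_le_sum (fun d => add_nonneg (le_refl (0:ℤ)) (single_nonneg' _ d))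
      ⟨D - 1, Nat.sub_lt hD Nat.one_pos⟩ ?_
    simp
  have caseB : ∀ d0 : Fin D, η d0 ≠ 0 → (∀ e, e < d0 → η e = 0) → 0 < d0.1 →
      GX γ (d0.1 - 1) = 0 → PreR D r q q' := by
    intro d0 hne hmin hpos hg
    obtain ⟨hE1, hE2, hE3, hE4⟩ := coef_nat hc
    have hηd : 1 ≤ η d0 := by have := hη d0; omega
    have hd2 := d0.2
    have hp1 : d0.1 - 1 + 1 = d0.1 := by omega
    have hlt1 : d0.1 - 1 < D := by omega
    have h3 := hE3 (d0.1 - 1) (by omega)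
    rw [hp1] at h3
    have hEp : GX η (d0.1 - 1) = 0 := by
      rw [GX, dif_pos hlt1]
      exact hmin _ (Fin.lt_def.mpr (show d0.1 - 1 < d0.1 by omega))
    have hEd : GX η d0.1 = η d0 := GX_fin η d0
    have hdtp : 0 ≤ TX q' (d0.1 - 1) - TX q (d0.1 - 1) := by
      rcases Nat.eq_zero_or_pos (d0.1 - 1) with h0 | h0
      · rw [h0] at hg ⊢
        rw [hE1, hg]; norm_num
      · have h5 := hE2 (d0.1 - 1 - 1) (by omega)
        rw [show d0.1 - 1 - 1 + 1 = d0.1 - 1 by omega] at h5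
        rw [h5, hg]
        have := GX_nonneg hγ (d0.1 - 1 - 1)
        omega
    have hu : 1 ≤ UX q (d0.1 - 1) := by
      have := UX_nonneg q' (d0.1 - 1)
      rw [hEp, hEd] at h3
      omega
    have hup : 1 ≤ (q (⟨d0.1 - 1, hlt1⟩ : Fin D)).2 := by
      have h6 : UX q (d0.1 - 1) = ((q (⟨d0.1 - 1, hlt1⟩ : Fin D)).2 : ℤ) := by
        rw [UX, dif_pos hlt1]
      omega
    obtain ⟨a, ha, -⟩ := decomp q ⟨d0.1 - 1, hlt1⟩ (0, 1) (by simp) (by simpa using hup)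
    have hpd : (⟨d0.1 - 1, hlt1⟩ : Fin D).1 + 1 < D := show d0.1 - 1 + 1 < D by omega
    have move := PreR.titro (D := D) (r := r) a ⟨d0.1 - 1, hlt1⟩ hpd
    have coef := coef_titro (D := D) r hD a ⟨d0.1 - 1, hlt1⟩ hpd
    rw [← ha] at move coef
    have hidx : (⟨(⟨d0.1 - 1, hlt1⟩ : Fin D).1 + 1, hpd⟩ : Fin D) = d0 :=
      Fin.ext (show d0.1 - 1 + 1 = d0.1 by omega)
    rw [hidx] at move coef
    exact doStep _ _ _ move coef (single_nonneg' _) (fun d => le_refl 0)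
      (single_le hη d0 hηd) (fun d => hγ d)
      (one_le_sum (fun d => add_nonneg (single_nonneg' _ d) (le_refl (0:ℤ))) d0 (by simp))
  by_cases hη0 : 1 ≤ η ⟨0, hD⟩
  · refine doStep _ _ _ (PreR.tol1 (D := D) (r := r) hD q) (coef_tol1 r hD q)
      (single_nonneg' _) (fun d => le_refl 0)
      (single_le hη _ hη0) (fun d => hγ d)
      (one_le_sum (fun d => add_nonneg (single_nonneg' _ d) (le_refl (0:ℤ))) ⟨0, hD⟩ (by simp))
  · by_cases hSη : (Finset.filter (fun d => η d ≠ 0) Finset.univ).Nonempty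
    · have hmem := Finset.min'_mem _ hSη
      set d0 := Finset.min' _ hSη with hd0
      rw [Finset.mem_filter] at hmem
      have hne : η d0 ≠ 0 := hmem.2
      have hmin : ∀ e, e < d0 → η e = 0 := by
        intro e he; by_contra h
        have hmem2 : e ∈ Finset.filter (fun d => η d ≠ 0) Finset.univ := by
          simp only [Finset.mem_filter, Finset.mem_univ, true_and]; exact h
        have hle := Finset.min'_le _ e hmem2
        exact absurd (lt_of_lt_of_le he hle) (lt_irrefl _)
      have hpos : 0 < d0.1 := by
        rcases Nat.eq_zero_or_pos d0.1 with h0 | h0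
        · exfalso
          have he : d0 = ⟨0, hD⟩ := Fin.ext h0
          rw [he] at hne
          have := hη ⟨0, hD⟩
          omega
        · exact h0
      by_cases hg : GX γ (d0.1 - 1) = 0
      · exact caseB d0 hne hmin hpos hg
      · have hd2 := d0.2
        have hlt : d0.1 - 1 < D := by omega
        have hγne : γ ⟨d0.1 - 1, hlt⟩ ≠ 0 := by
          rw [GX, dif_pos hlt] at hg
          exact hg
        have hmemd : (⟨d0.1 - 1, hlt⟩ : Fin D) ∈ Finset.filter (fun d => γ d ≠ 0) Finset.univ := by
          simp only [Finset.mem_filter, Finset.mem_univ, true_and]; exact hγne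
        have hSγ : (Finset.filter (fun d => γ d ≠ 0) Finset.univ).Nonempty := ⟨_, hmemd⟩
        have hmemγ := Finset.min'_mem _ hSγ
        set j := Finset.min' _ hSγ with hj
        rw [Finset.mem_filter] at hmemγ
        have hjne : γ j ≠ 0 := hmemγ.2
        have hjmin : ∀ e, e < j → γ e = 0 := by
          intro e he; by_contra h
          have hmem2 : e ∈ Finset.filter (fun d => γ d ≠ 0) Finset.univ := by
            simp only [Finset.mem_filter, Finset.mem_univ, true_and]; exact h
          have hle := Finset.min'_le _ e hmem2
          exact absurd (lt_of_lt_of_le he hle) (lt_irrefl _)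
        have hjle : j.1 ≤ d0.1 - 1 := by
          have h7 := Finset.min'_le _ _ hmemd
          rw [← hj] at h7
          exact Fin.le_def.mp h7
        have hj1 : j.1 + 1 < D := by omega
        by_cases hη1 : η ⟨j.1 + 1, hj1⟩ = 0
        · exact caseD j hjne hjmin hj1 hη1
        · exact caseC j hjne hjmin hj1 (by have := hη ⟨j.1 + 1, hj1⟩; omega)
    · have hηz : ∀ d, η d = 0 := by
        intro d; by_contra h
        exact hSη ⟨d, Finset.mem_filter.mpr ⟨Finset.mem_univ _, h⟩⟩
      by_cases hSγ : (Finset.filter (fun d => γ d ≠ 0) Finset.univ).Nonempty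
      · have hmemγ := Finset.min'_mem _ hSγ
        set j := Finset.min' _ hSγ with hj
        rw [Finset.mem_filter] at hmemγ
        have hjne : γ j ≠ 0 := hmemγ.2
        have hjmin : ∀ e, e < j → γ e = 0 := by
          intro e he; by_contra h
          have hmem2 : e ∈ Finset.filter (fun d => γ d ≠ 0) Finset.univ := by
            simp only [Finset.mem_filter, Finset.mem_univ, true_and]; exact h
          have hle := Finset.min'_le _ e hmem2
          exact absurd (lt_of_lt_of_le he hle) (lt_irrefl _)
        by_cases hj1 : j.1 + 1 < D
        · exact caseD j hjne hjmin hj1 (hηz _)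
        · have hd2 := j.2
          exact caseE hηz j hjne hjmin (by omega)
      · have hγz : ∀ d, γ d = 0 := by
          intro d; by_contra h
          refine hSγ ⟨d, ?_⟩
          simp only [Finset.mem_filter, Finset.mem_univ, true_and]; exact h
        have hdt0 : ∀ d, dt q q' d = 0 := by
          intro d
          rcases Nat.eq_zero_or_pos d.1 with h0 | h0
          · have he : d = ⟨0, hD⟩ := Fin.ext h0
            rw [he, hc.1, hγz]; norm_num
          · rw [hc.2.1 d h0, hγz, hγz]; norm_num
        have hdn0 : ∀ d, dn q q' d = 0 := by
          intro d
          by_cases h : d.1 + 1 < D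
          · rw [hc.2.2.1 d h, hηz, hηz]; norm_num
          · have hd2 := d.2
            have he : d = ⟨D - 1, Nat.sub_lt hD Nat.one_pos⟩ :=
              Fin.ext (show d.1 = D - 1 by omega)
            rw [he, dn_last hc, hηz, hγz]; norm_num
        have hqq : q = q' := by
          funext d
          have h1 := hdt0 d
          have h2 := hdn0 d
          rw [dt] at h1
          rw [dn] at h2
          have e1 : (q d).1 = (q' d).1 := by omega
          have e2 : (q d).2 = (q' d).2 := by omega
          exact Prod.ext e1 e2
        exact hqq ▸ PreR.refl q

/-- `q ⪯_r q'` iff the coefficient vector `(η, γ) ∈ ℤ^{2D}` representing `[q' − q]`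
in the basis `(tol₁, titro₂, …, titro_D, exch_{1,2}, …, exch_{D−1,D}, bal_r)` —
determined by the recurrences `Δt₁ = −γ₁`, `Δtᵈ = γ_{d−1} − γᵈ` (2 ≤ d ≤ D),
`Δnᵈ = ηᵈ − η_{d+1}` (1 ≤ d ≤ D−1), `Σᵈ Δnᵈ = η₁ − (1+r)γ_D` — is componentwise
nonnegative. -/
theorem stmt_11 (D r : ℕ) (hD : 0 < D) (hr : 1 ≤ r) (q q' : Fin D → ℕ × ℕ) :
    PreR D r q q' ↔
      ∃ η γ : Fin D → ℤ,
        (∀ d, 0 ≤ η d) ∧ (∀ d, 0 ≤ γ d) ∧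
        dt q q' ⟨0, hD⟩ = -γ ⟨0, hD⟩ ∧
        (∀ d : Fin D, ∀ h : 0 < d.1,
          dt q q' d = γ ⟨d.1 - 1, lt_of_le_of_lt (Nat.sub_le _ _) d.2⟩ - γ d) ∧
        (∀ d : Fin D, ∀ h : d.1 + 1 < D, dn q q' d = η d - η ⟨d.1 + 1, h⟩) ∧
        (∑ d, dn q q' d) = η ⟨0, hD⟩ - (1 + (r : ℤ)) * γ ⟨D - 1, Nat.sub_lt hD Nat.one_pos⟩ := by
  constructor
  · intro h
    obtain ⟨η, γ, h1, h2, c1, c2, c3, c4⟩ := forward hD h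
    exact ⟨η, γ, h1, h2, c1, c2, c3, c4⟩
  · rintro ⟨η, γ, h1, h2, c1, c2, c3, c4⟩
    obtain ⟨Nn, hNn⟩ : ∃ Nn : ℕ, (∑ d, (η d + γ d)) = (Nn : ℤ) :=
      ⟨(∑ d, (η d + γ d)).toNat, (Int.toNat_of_nonneg (Finset.sum_nonneg fun d _ => by
        have := h1 d; have := h2 d; omega)).symm⟩
    exact backward hD hr Nn q q' η γ h1 h2 ⟨c1, c2, c3, c4⟩ hNn
end

section
/- For every dose d with 1 ≤ d ≤ D and every r ≥ 1, the tally with one toxicity and one toleration at dose d is ⪯_r-below the empty tally: ⟨1/2⟩ᵈ ⪯_r ⟨0/0⟩. (Proof by downward induction from d = D using bal_r at the top dose and, for d < D, the chain ⟨1/2⟩ᵈ ⪯ ⟨1/1,0/1⟩_{d,d+1} ⪯_{exch} ⟨0/1,1/1⟩_{d,d+1} ⪯ ⟨1/2⟩_{d+1}.) -/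
lemma sgl_add {D : ℕ} (j : Fin D) (a b : ℕ × ℕ) : sgl j a + sgl j b = sgl j (a + b) := by
  simp [sgl, ← Pi.single_add]

lemma addTolAt (D r : ℕ) (i : ℕ) (h : i < D) (q : Fin D → ℕ × ℕ) :
    PreR D r q (q + sgl ⟨i, h⟩ (0, 1)) := by
  induction i with
  | zero => exact PreR.tol1 h q
  | succ n ih =>
      have hn : n < D := Nat.lt_of_succ_lt h
      exact PreR.trans (ih hn) (PreR.titro q ⟨n, hn⟩ h)

lemma addTols (D r : ℕ) (j : Fin D) (n : ℕ) (q : Fin D → ℕ × ℕ) :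
    PreR D r q (q + sgl j (0, n)) := by
  induction n with
  | zero => simpa [sgl, Prod.mk_zero_zero] using PreR.refl (D := D) (r := r) q
  | succ m ih =>
      have h1 := addTolAt D r j.1 j.2 (q + sgl j (0, m))
      rw [Fin.eta, add_assoc, sgl_add] at h1
      exact PreR.trans ih h1

lemma topLemma (D r : ℕ) (hr : 1 ≤ r) (h : 0 < D) :
    PreR D r (sgl (⟨D - 1, Nat.sub_lt h Nat.one_pos⟩ : Fin D) (1, 1)) 0 := by
  set j : Fin D := ⟨D - 1, Nat.sub_lt h Nat.one_pos⟩
  have h1 := addTols D r j (r - 1) (sgl j (1, 1))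
  rw [sgl_add] at h1
  have he : ((1, 1) : ℕ × ℕ) + (0, r - 1) = (1, r) := by
    simp [Prod.ext_iff, Nat.add_sub_cancel' hr]
  rw [he] at h1
  have h2 := PreR.bal (r := r) h (0 : Fin D → ℕ × ℕ)
  rw [zero_add] at h2
  exact PreR.trans h1 h2

lemma stepLemma (D r : ℕ) (i : ℕ) (h : i + 1 < D) :
    PreR D r (sgl (⟨i, Nat.lt_of_succ_lt h⟩ : Fin D) (1, 1)) (sgl (⟨i + 1, h⟩ : Fin D) (1, 1)) := by
  set a : Fin D := ⟨i, Nat.lt_of_succ_lt h⟩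
  set b : Fin D := ⟨i + 1, h⟩
  have hp : ((1, 0) : ℕ × ℕ) + (0, 1) = (1, 1) := rfl
  have e1 : sgl a (1, 1) = sgl a (1, 0) + sgl a (0, 1) := by rw [sgl_add, hp]
  have s1 : PreR D r (sgl a (1, 0) + sgl a (0, 1)) (sgl a (1, 0) + sgl b (0, 1)) :=
    PreR.titro (sgl a (1, 0)) a h
  have s2 : PreR D r (sgl a (1, 0) + sgl b (0, 1)) (sgl a (0, 1) + sgl b (1, 0)) := by
    have := PreR.exch (r := r) (0 : Fin D → ℕ × ℕ) a b (by simp [a, b, Fin.lt_def])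
    simpa using this
  have s3 : PreR D r (sgl b (1, 0) + sgl a (0, 1)) (sgl b (1, 0) + sgl b (0, 1)) :=
    PreR.titro (sgl b (1, 0)) a h
  rw [add_comm (sgl a (0,1))] at s2
  rw [sgl_add, hp] at s3
  rw [e1]
  exact PreR.trans s1 (PreR.trans s2 s3)

/-- For every dose `d` and every `r ≥ 1`, the tally with one toxicity and one
toleration at dose `d` is `⪯_r`-below the empty tally: `⟨1/2⟩ᵈ ⪯_r ⟨0/0⟩`. -/
theorem stmt_15 (D r : ℕ) (hr : 1 ≤ r) (d : Fin D) : PreR D r (sgl d (1, 1)) 0 := by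
  have hD : 0 < D := d.pos
  suffices H : ∀ n i (h : i < D), D - 1 - i = n → PreR D r (sgl (⟨i, h⟩ : Fin D) (1, 1)) 0 by
    have := H (D - 1 - d.1) d.1 d.2 rfl
    simpa using this
  intro n
  induction n with
  | zero =>
      intro i h hi
      have : i = D - 1 := by omega
      subst this
      exact topLemma D r hr hD
  | succ m ih =>
      intro i h hi
      have h1 : i + 1 < D := by omega
      exact PreR.trans (stepLemma D r i h1) (ih (i + 1) h1 (by omega))
end
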